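/- arXiv:math/0501441 — 9 statements merged into one kernel-verified Lean document; each statement's English description precedes it below -/
import Mathlib

section
/- For all positive integers m and n, the identity Σ_{k=1}^{n} ((1-p^{4k})/(1-p^4)) · ((1-p^{2k})/(1-p^2))^{m-1} · p^{(m+1)(n-k)} = Σ_{r=0}^{⌊m/2⌋} (-1)^r ( C(m-1,r) - C(m-1,r-2) ) · (1-p^{(m+1-2r)n}) (1 + (-1)^m p^{(m+1-2r)(n+1)}) p^{2rn} / ( (1-p^4)(1-p^2)^{m-1}(1-p^{m+1-2r}) ) holds. -/
/-- Binomial coefficient with integer arguments: `C(a,b) = 0` when `b < 0` or `b > a`. -/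
def ch (a b : ℤ) : ℤ := if 0 ≤ b ∧ b ≤ a then (a.toNat).choose b.toNat else 0

lemma ch_of_neg {a b : ℤ} (h : b < 0) : ch a b = 0 := by
  unfold ch; rw [if_neg]; omega

lemma ch_of_gt {a b : ℤ} (h : a < b) : ch a b = 0 := by
  unfold ch; rw [if_neg]; omega

lemma ch_cast (a b : ℕ) : ch (a : ℤ) (b : ℤ) = (a.choose b : ℤ) := by
  unfold ch
  by_cases h : (b : ℤ) ≤ (a : ℤ)
  · rw [if_pos ⟨Int.natCast_nonneg b, h⟩]; simp
  · rw [if_neg (by omega)]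
    rw [Nat.choose_eq_zero_of_lt (by exact_mod_cast not_le.mp h)]
    simp

lemma ch_pascal (a : ℕ) (b : ℤ) : ch ((a : ℤ) + 1) b = ch a b + ch a (b - 1) := by
  rcases lt_or_ge b 0 with h | h
  · rw [ch_of_neg h, ch_of_neg h, ch_of_neg (by omega)]; ring
  · obtain ⟨k, rfl⟩ := Int.eq_ofNat_of_zero_le h
    rcases k with _ | k'
    · simp only [Int.ofNat_eq_natCast, Nat.cast_zero]
      rw [ch_of_neg (show (0:ℤ) - 1 < 0 by norm_num)]
      rw [show ((a : ℤ) + 1) = ((a + 1 : ℕ) : ℤ) by push_cast; ring]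
      rw [show (0:ℤ) = ((0:ℕ):ℤ) by norm_num, ch_cast, ch_cast]
      simp
    · rw [show ((a : ℤ) + 1) = ((a + 1 : ℕ) : ℤ) by push_cast; ring]
      rw [show ((Nat.succ k' : ℕ) : ℤ) - 1 = ((k' : ℕ) : ℤ) by push_cast; ring]
      rw [ch_cast, ch_cast, ch_cast]
      rw [Nat.choose_succ_succ']
      push_cast; ring

lemma ch_symm (a : ℕ) (b : ℤ) : ch a b = ch a ((a : ℤ) - b) := by
  rcases lt_or_ge b 0 with h | h
  · rw [ch_of_neg h, ch_of_gt (by omega)]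
  · rcases le_or_gt b a with h2 | h2
    · obtain ⟨k, rfl⟩ := Int.eq_ofNat_of_zero_le h
      have hk : k ≤ a := by exact_mod_cast h2
      rw [show ((a : ℤ) - (k : ℕ)) = ((a - k : ℕ) : ℤ) by push_cast [hk]; ring]
      rw [ch_cast, ch_cast, Nat.choose_symm hk]
    · rw [ch_of_gt h2, ch_of_neg (by omega)]

lemma coeff1 (m : ℕ) (hm : 1 ≤ m) (r : ℤ) :
    ch ((m:ℤ)-1) r - ch ((m:ℤ)-1) (r-2) = ch (m:ℤ) r - ch (m:ℤ) (r-1) := by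
  obtain ⟨a, rfl⟩ := Nat.exists_eq_add_of_le hm
  have h1 := ch_pascal a r
  have h2 := ch_pascal a (r-1)
  rw [show r - 1 - 1 = r - 2 by ring] at h2
  rw [show ((1 + a : ℕ) : ℤ) - 1 = (a : ℤ) by push_cast; ring]
  rw [show ((1 + a : ℕ) : ℤ) = (a : ℤ) + 1 by push_cast; ring]
  rw [h1, h2]; ring

lemma coeff2 (m : ℕ) (r : ℤ) :
    ch (m:ℤ) ((m:ℤ)+1-r) - ch (m:ℤ) ((m:ℤ)-r) = ch (m:ℤ) (r-1) - ch (m:ℤ) r := by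
  have h1 := ch_symm m ((m:ℤ)+1-r)
  have h2 := ch_symm m ((m:ℤ)-r)
  rw [show (m:ℤ) - ((m:ℤ)+1-r) = r-1 by ring] at h1
  rw [show (m:ℤ) - ((m:ℤ)-r) = r by ring] at h2
  rw [h1, h2]

lemma middle_zero (m j : ℕ) (h : 2*j = m+1) :
    ch (m:ℤ) (j:ℤ) - ch (m:ℤ) ((j:ℤ)-1) = 0 := by
  have h1 := ch_symm m (j:ℤ)
  rw [show (m:ℤ) - (j:ℤ) = (j:ℤ) - 1 by push_cast; omega] at h1
  omega

lemma binom (m : ℕ) (q : ℝ) :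
    (1-q)^m = ∑ j ∈ Finset.range (m+1), (-1:ℝ)^j * (m.choose j : ℝ) * q^j := by
  rw [show (1-q) = (-q) + 1 by ring, add_pow]
  apply Finset.sum_congr rfl
  intro j hj
  rw [one_pow, neg_pow]
  ring

lemma claim1 (m : ℕ) (q : ℝ) :
    (1+q) * (1-q)^m = ∑ j ∈ Finset.range (m+2),
      (-1:ℝ)^j * ((ch (m:ℤ) (j:ℤ) - ch (m:ℤ) ((j:ℤ)-1) : ℤ) : ℝ) * q^j := by
  have hsplit : ∀ j : ℕ, (-1:ℝ)^j * ((ch (m:ℤ) (j:ℤ) - ch (m:ℤ) ((j:ℤ)-1) : ℤ) : ℝ) * q^j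
      = (-1:ℝ)^j * ((ch (m:ℤ) (j:ℤ) : ℤ) : ℝ) * q^j
        - (-1:ℝ)^j * ((ch (m:ℤ) ((j:ℤ)-1) : ℤ) : ℝ) * q^j := by
    intro j; push_cast; ring
  simp_rw [hsplit]
  rw [Finset.sum_sub_distrib]
  have hA : ∑ j ∈ Finset.range (m+2), (-1:ℝ)^j * ((ch (m:ℤ) (j:ℤ) : ℤ) : ℝ) * q^j
      = (1-q)^m := by
    rw [Finset.sum_range_succ]
    rw [ch_of_gt (by exact_mod_cast Nat.lt_succ_self m)]
    rw [binom]
    simp only [Int.cast_zero, mul_zero, zero_mul, add_zero]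
    apply Finset.sum_congr rfl
    intro j hj
    rw [ch_cast]; push_cast; ring
  have hB : ∑ j ∈ Finset.range (m+2), (-1:ℝ)^j * ((ch (m:ℤ) ((j:ℤ)-1) : ℤ) : ℝ) * q^j
      = -q * (1-q)^m := by
    rw [Finset.sum_range_succ']
    rw [ch_of_neg (show ((0:ℕ):ℤ) - 1 < 0 by norm_num)]
    have : ∀ j : ℕ, ((j+1 : ℕ) : ℤ) - 1 = (j : ℤ) := by intro j; push_cast; ring
    simp only [this, Int.cast_zero, mul_zero, zero_mul, add_zero]
    rw [binom, Finset.mul_sum]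
    apply Finset.sum_congr rfl
    intro j hj
    rw [ch_cast, pow_succ, pow_succ]
    push_cast
    ring
  rw [hA, hB]
  ring

lemma claim2 (m : ℕ) (hm : 1 ≤ m) (q : ℝ) :
    ∑ r ∈ Finset.range (m/2+1),
        (-1:ℝ)^r * ((ch ((m:ℤ)-1) (r:ℤ) - ch ((m:ℤ)-1) ((r:ℤ)-2) : ℤ):ℝ)
          * (q^r + (-1:ℝ)^m * q^(m+1-r))
    = ∑ j ∈ Finset.range (m+2),
        (-1:ℝ)^j * ((ch (m:ℤ) (j:ℤ) - ch (m:ℤ) ((j:ℤ)-1) : ℤ):ℝ) * q^j := by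
  set f : ℕ → ℝ := fun j => (-1:ℝ)^j * ((ch (m:ℤ) (j:ℤ) - ch (m:ℤ) ((j:ℤ)-1) : ℤ):ℝ) * q^j
    with hf
  have hterm : ∀ r ∈ Finset.range (m/2+1),
      (-1:ℝ)^r * ((ch ((m:ℤ)-1) (r:ℤ) - ch ((m:ℤ)-1) ((r:ℤ)-2) : ℤ):ℝ)
          * (q^r + (-1:ℝ)^m * q^(m+1-r)) = f r + f (m+1-r) := by
    intro r hr
    have hr2 : 2*r ≤ m := by
      have := Finset.mem_range.mp hr; omega
    have e_eq : (ch ((m:ℤ)-1) (r:ℤ) - ch ((m:ℤ)-1) ((r:ℤ)-2) : ℤ)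
        = ch (m:ℤ) (r:ℤ) - ch (m:ℤ) ((r:ℤ)-1) := coeff1 m hm r
    have hcast1 : ((m+1-r : ℕ):ℤ) = (m:ℤ)+1-(r:ℤ) := by omega
    have mirror : (ch (m:ℤ) ((m+1-r : ℕ):ℤ) - ch (m:ℤ) (((m+1-r:ℕ):ℤ)-1) : ℤ)
        = -(ch (m:ℤ) (r:ℤ) - ch (m:ℤ) ((r:ℤ)-1)) := by
      rw [hcast1, show (m:ℤ)+1-(r:ℤ)-1 = (m:ℤ)-(r:ℤ) by ring]
      have := coeff2 m (r:ℤ)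
      omega
    have key : (-1:ℝ)^(m+1-r) = -((-1)^m * (-1)^r) := by
      have h2 : (-1:ℝ)^(m+1-r) * (-1)^r = (-1)^(m+1) := by
        rw [← pow_add, show m+1-r+r = m+1 by omega]
      have hrr : ((-1:ℝ)^r) * ((-1)^r) = 1 := by rw [← mul_pow]; norm_num
      calc (-1:ℝ)^(m+1-r) = (-1)^(m+1-r) * ((-1)^r * (-1)^r) := by rw [hrr, mul_one]
      _ = ((-1:ℝ)^(m+1-r) * (-1)^r) * (-1)^r := by ring
      _ = ((-1:ℝ)^(m+1)) * (-1)^r := by rw [h2]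
      _ = -((-1:ℝ)^m * (-1)^r) := by rw [pow_succ]; ring
    rw [e_eq, hf]
    simp only []
    rw [mirror, key]
    push_cast
    ring
  rw [Finset.sum_congr rfl hterm, Finset.sum_add_distrib]
  have hinj : ∀ x ∈ Finset.range (m/2+1), ∀ y ∈ Finset.range (m/2+1),
      m+1-x = m+1-y → x = y := by
    intro x hx y hy h
    have := Finset.mem_range.mp hx
    have := Finset.mem_range.mp hy
    omega
  rw [show ∑ r ∈ Finset.range (m/2+1), f (m+1-r)
      = ∑ j ∈ (Finset.range (m/2+1)).image (fun r => m+1-r), f j from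
    (Finset.sum_image hinj).symm]
  rw [← Finset.sum_union]
  · apply Finset.sum_subset
    · intro j hj
      simp only [Finset.mem_union, Finset.mem_range, Finset.mem_image] at hj ⊢
      rcases hj with h | ⟨r, hr, rfl⟩ <;> omega
    · intro j hj hj2
      simp only [Finset.mem_union, Finset.mem_range, Finset.mem_image, not_or, not_exists] at hj2
      obtain ⟨h1, h2⟩ := hj2
      have h3 := h2 (m+1-j)
      have hj' := Finset.mem_range.mp hj
      have hmid : 2*j = m+1 := by omega
      rw [hf]
      simp only []
      rw [middle_zero m j hmid]
      simp
  · rw [Finset.disjoint_left]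
    intro j hj hj2
    simp only [Finset.mem_range] at hj
    simp only [Finset.mem_image, Finset.mem_range] at hj2
    obtain ⟨r, hr, hrj⟩ := hj2
    omega

lemma keyPoly (m : ℕ) (hm : 1 ≤ m) (q : ℝ) :
    ∑ r ∈ Finset.range (m/2+1),
        (-1:ℝ)^r * ((ch ((m:ℤ)-1) (r:ℤ) - ch ((m:ℤ)-1) ((r:ℤ)-2) : ℤ):ℝ)
          * (q^r + (-1:ℝ)^m * q^(m+1-r))
    = (1+q) * (1-q)^m := by
  rw [claim2 m hm q, ← claim1]

lemma one_sub_pow_ne (p : ℝ) (hp0 : 0 < p) (hp1 : p < 1) (a : ℕ) (ha : 1 ≤ a) :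
    (1:ℝ) - p^a ≠ 0 := by
  have : p^a < 1 := pow_lt_one₀ hp0.le hp1 (by omega)
  linarith

lemma step_r (m r n : ℕ) (hm : 1 ≤ m) (hr2 : 2*r ≤ m) (p : ℝ)
    (hp0 : 0 < p) (hp1 : p < 1) (c : ℝ) :
    c * ((1 - p^((m+1-2*r)*(n+1))) * (1 + (-1:ℝ)^m * p^((m+1-2*r)*(n+1+1))) * p^(2*r*(n+1))) /
      ((1-p^4)*(1-p^2)^(m-1)*(1-p^(m+1-2*r)))
    - p^(m+1) * (c * ((1 - p^((m+1-2*r)*n)) * (1 + (-1:ℝ)^m * p^((m+1-2*r)*(n+1))) * p^(2*r*n)) /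
      ((1-p^4)*(1-p^2)^(m-1)*(1-p^(m+1-2*r))))
    = c * ((p^(2*(n+1)))^r + (-1:ℝ)^m * (p^(2*(n+1)))^(m+1-r)) / ((1-p^4)*(1-p^2)^(m-1)) := by
  obtain ⟨a, ha, ha1⟩ : ∃ a, m+1-2*r = a ∧ m+1 = a + 2*r := ⟨m+1-2*r, rfl, by omega⟩
  have ha0 : 1 ≤ a := by omega
  rw [ha, show m+1-r = a+r by omega, show m+1 = a+2*r from ha1]
  have hZ : (1:ℝ) - p^a ≠ 0 := one_sub_pow_ne p hp0 hp1 a ha0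
  have hY : (1:ℝ) - p^4 ≠ 0 := one_sub_pow_ne p hp0 hp1 4 (by norm_num)
  have hX : ((1:ℝ) - p^2)^(m-1) ≠ 0 :=
    pow_ne_zero _ (one_sub_pow_ne p hp0 hp1 2 (by norm_num))
  set e := (-1:ℝ)^m
  field_simp
  ring

lemma main_aux (m : ℕ) (hm : 0 < m) (p : ℝ) (hp0 : 0 < p) (hp1 : p < 1) (n : ℕ) :
    (∑ k ∈ Finset.Icc 1 n,
        ((1 - p ^ (4 * k)) / (1 - p ^ 4)) * ((1 - p ^ (2 * k)) / (1 - p ^ 2)) ^ (m - 1) *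
          p ^ ((m + 1) * (n - k))) =
      ∑ r ∈ Finset.range (m / 2 + 1),
        (-1 : ℝ) ^ r * ((ch ((m : ℤ) - 1) (r : ℤ) - ch ((m : ℤ) - 1) ((r : ℤ) - 2) : ℤ) : ℝ) *
          ((1 - p ^ ((m + 1 - 2 * r) * n)) *
            (1 + (-1 : ℝ) ^ m * p ^ ((m + 1 - 2 * r) * (n + 1))) * p ^ (2 * r * n)) /
          ((1 - p ^ 4) * (1 - p ^ 2) ^ (m - 1) * (1 - p ^ (m + 1 - 2 * r))) := by
  induction n with
  | zero => simp
  | succ n ih =>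
    rw [Finset.sum_Icc_succ_top (Nat.succ_le_succ (Nat.zero_le n))]
    have hsplit : ∀ k ∈ Finset.Icc 1 n,
        ((1 - p ^ (4 * k)) / (1 - p ^ 4)) * ((1 - p ^ (2 * k)) / (1 - p ^ 2)) ^ (m - 1) *
          p ^ ((m + 1) * (n + 1 - k))
        = p^(m+1) * (((1 - p ^ (4 * k)) / (1 - p ^ 4)) *
            ((1 - p ^ (2 * k)) / (1 - p ^ 2)) ^ (m - 1) * p ^ ((m + 1) * (n - k))) := by
      intro k hk
      obtain ⟨hk1, hk2⟩ := Finset.mem_Icc.mp hk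
      rw [show (m+1)*(n+1-k) = (m+1) + (m+1)*(n-k) by
        have : n+1-k = (n-k)+1 := by omega
        rw [this]; ring]
      rw [pow_add]
      ring
    rw [Finset.sum_congr rfl hsplit, ← Finset.mul_sum, ih]
    simp only [Nat.sub_self, Nat.mul_zero, pow_zero, mul_one]
    have hdiff :
        (∑ r ∈ Finset.range (m / 2 + 1),
          (-1 : ℝ) ^ r * ((ch ((m : ℤ) - 1) (r : ℤ) - ch ((m : ℤ) - 1) ((r : ℤ) - 2) : ℤ) : ℝ) *
            ((1 - p ^ ((m + 1 - 2 * r) * (n+1))) *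
              (1 + (-1 : ℝ) ^ m * p ^ ((m + 1 - 2 * r) * (n + 1 + 1))) * p ^ (2 * r * (n+1))) /
            ((1 - p ^ 4) * (1 - p ^ 2) ^ (m - 1) * (1 - p ^ (m + 1 - 2 * r))))
        - p^(m+1) * (∑ r ∈ Finset.range (m / 2 + 1),
          (-1 : ℝ) ^ r * ((ch ((m : ℤ) - 1) (r : ℤ) - ch ((m : ℤ) - 1) ((r : ℤ) - 2) : ℤ) : ℝ) *
            ((1 - p ^ ((m + 1 - 2 * r) * n)) *
              (1 + (-1 : ℝ) ^ m * p ^ ((m + 1 - 2 * r) * (n + 1))) * p ^ (2 * r * n)) /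
            ((1 - p ^ 4) * (1 - p ^ 2) ^ (m - 1) * (1 - p ^ (m + 1 - 2 * r))))
        = (1 - p ^ (4 * (n+1))) / (1 - p ^ 4) *
            ((1 - p ^ (2 * (n+1))) / (1 - p ^ 2)) ^ (m - 1) := by
      rw [Finset.mul_sum, ← Finset.sum_sub_distrib]
      have hcong : ∀ r ∈ Finset.range (m/2+1),
          (-1 : ℝ) ^ r * ((ch ((m : ℤ) - 1) (r : ℤ) - ch ((m : ℤ) - 1) ((r : ℤ) - 2) : ℤ) : ℝ) *
            ((1 - p ^ ((m + 1 - 2 * r) * (n+1))) *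
              (1 + (-1 : ℝ) ^ m * p ^ ((m + 1 - 2 * r) * (n + 1 + 1))) * p ^ (2 * r * (n+1))) /
            ((1 - p ^ 4) * (1 - p ^ 2) ^ (m - 1) * (1 - p ^ (m + 1 - 2 * r)))
          - p^(m+1) * ((-1 : ℝ) ^ r *
              ((ch ((m : ℤ) - 1) (r : ℤ) - ch ((m : ℤ) - 1) ((r : ℤ) - 2) : ℤ) : ℝ) *
            ((1 - p ^ ((m + 1 - 2 * r) * n)) *
              (1 + (-1 : ℝ) ^ m * p ^ ((m + 1 - 2 * r) * (n + 1))) * p ^ (2 * r * n)) /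
            ((1 - p ^ 4) * (1 - p ^ 2) ^ (m - 1) * (1 - p ^ (m + 1 - 2 * r))))
          = ((-1 : ℝ) ^ r *
              ((ch ((m : ℤ) - 1) (r : ℤ) - ch ((m : ℤ) - 1) ((r : ℤ) - 2) : ℤ) : ℝ) *
             ((p^(2*(n+1)))^r + (-1:ℝ)^m * (p^(2*(n+1)))^(m+1-r)))
            / ((1-p^4)*(1-p^2)^(m-1)) := by
        intro r hr
        have hr2 : 2*r ≤ m := by have := Finset.mem_range.mp hr; omega
        exact step_r m r n hm hr2 p hp0 hp1 _
      rw [Finset.sum_congr rfl hcong, ← Finset.sum_div]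
      have hmul : ∀ r ∈ Finset.range (m/2+1),
          ((-1 : ℝ) ^ r *
              ((ch ((m : ℤ) - 1) (r : ℤ) - ch ((m : ℤ) - 1) ((r : ℤ) - 2) : ℤ) : ℝ) *
             ((p^(2*(n+1)))^r + (-1:ℝ)^m * (p^(2*(n+1)))^(m+1-r)))
          = (-1 : ℝ) ^ r *
              ((ch ((m : ℤ) - 1) (r : ℤ) - ch ((m : ℤ) - 1) ((r : ℤ) - 2) : ℤ) : ℝ) *
             ((p^(2*(n+1)))^r + (-1:ℝ)^m * (p^(2*(n+1)))^(m+1-r)) := fun r _ => rfl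
      rw [keyPoly m hm (p^(2*(n+1)))]
      have hY : (1:ℝ) - p^4 ≠ 0 := one_sub_pow_ne p hp0 hp1 4 (by norm_num)
      have h2 : (1:ℝ) - p^2 ≠ 0 := one_sub_pow_ne p hp0 hp1 2 (by norm_num)
      have hX : ((1:ℝ) - p^2)^(m-1) ≠ 0 := pow_ne_zero _ h2
      rw [div_pow]
      obtain ⟨m', rfl⟩ : ∃ m', m = m'+1 := ⟨m-1, by omega⟩
      simp only [Nat.add_sub_cancel]
      rw [show (1 + p^(2*(n+1))) * (1 - p^(2*(n+1)))^(m'+1)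
          = (1 - p^(4*(n+1))) * (1 - p^(2*(n+1)))^m' by rw [pow_succ]; ring]
      field_simp
    linarith

theorem stmt4 (m n : ℕ) (hm : 0 < m) (hn : 0 < n) (p : ℝ) (hp0 : 0 < p) (hp1 : p < 1) :
    (∑ k ∈ Finset.Icc 1 n,
        ((1 - p ^ (4 * k)) / (1 - p ^ 4)) * ((1 - p ^ (2 * k)) / (1 - p ^ 2)) ^ (m - 1) *
          p ^ ((m + 1) * (n - k))) =
      ∑ r ∈ Finset.range (m / 2 + 1),
        (-1 : ℝ) ^ r * ((ch ((m : ℤ) - 1) (r : ℤ) - ch ((m : ℤ) - 1) ((r : ℤ) - 2) : ℤ) : ℝ) *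
          ((1 - p ^ ((m + 1 - 2 * r) * n)) *
            (1 + (-1 : ℝ) ^ m * p ^ ((m + 1 - 2 * r) * (n + 1))) * p ^ (2 * r * n)) /
          ((1 - p ^ 4) * (1 - p ^ 2) ^ (m - 1) * (1 - p ^ (m + 1 - 2 * r))) := by
  exact main_aux m hm p hp0 hp1 n
end

section
/- For every even positive integer m and every positive integer n, the identity Σ_{k=1}^{n} ((1-p^{4k})/(1-p^4)) · ((1-p^{2k})/(1-p^2))^{m-1} · p^{(m+1)(n-k)} = Σ_{r=0}^{m/2} (-1)^r ( C(m-1,r) - C(m-1,r-2) ) · (1-p^{(m+1-2r)(2n+1)}) p^{2nr} / ( (1-p^4)(1-p^2)^{m-1}(1-p^{m+1-2r}) ) holds. -/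
open Finset

lemma ch_nat (a b : ℕ) (h : b ≤ a) : ch a b = a.choose b := by
  simp [ch, h]

lemma ch_neg (a b : ℤ) (h : b < 0) : ch a b = 0 := by
  simp [ch]; intro h'; omega

lemma sum_Icc_one (n : ℕ) (f : ℕ → ℝ) : ∑ k ∈ Icc 1 n, f k = ∑ i ∈ range n, f (1+i) := by
  rw [← Finset.Ico_add_one_right_eq_Icc, Finset.sum_Ico_eq_sum_range]; simp

/-- `∑_{k=1}^n x^(n-k) = ∑_{i<n} x^i`. -/
lemma sum_Icc_rev (n : ℕ) (x : ℝ) : ∑ k ∈ Icc 1 n, x ^ (n - k) = ∑ i ∈ range n, x ^ i := by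
  rw [sum_Icc_one]
  rw [← Finset.sum_range_reflect (fun i => x ^ i) n]
  apply Finset.sum_congr rfl
  intro i hi
  simp only [mem_range] at hi
  congr 1
  omega

noncomputable def cc (m r : ℕ) : ℝ :=
  (-1:ℝ)^r * (((ch ((m:ℤ)-1) (r:ℤ) - ch ((m:ℤ)-1) ((r:ℤ)-2)) : ℤ) : ℝ)

noncomputable def c' (m r : ℕ) : ℝ :=
  (-1:ℝ)^r * ((m.choose r : ℝ) - (if r = 0 then 0 else (m.choose (r-1) : ℝ)))

lemma ch_cast_s5 (m r : ℕ) (hm : 0 < m) (hr : r ≤ m - 1) :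
    ch ((m:ℤ)-1) (r:ℤ) = (m-1).choose r := by
  rw [show (m:ℤ)-1 = ((m-1:ℕ):ℤ) from by omega]
  exact_mod_cast ch_nat (m-1) r hr

lemma pascal (m r : ℕ) (hm : 0 < m) : m.choose (r+1) = (m-1).choose r + (m-1).choose (r+1) := by
  have h := Nat.choose_succ_succ (m-1) r
  rw [Nat.succ_eq_add_one, Nat.sub_add_cancel hm] at h
  exact h

lemma cc_eq_c' (m r : ℕ) (hm : 0 < m) (hr : r ≤ m/2) (hme : Even m) : cc m r = c' m r := by
  match r with
  | 0 =>
    have h2 : ch ((m:ℤ)-1) ((0:ℤ)-2) = 0 := ch_neg _ _ (by norm_num)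
    have h1 : ch ((m:ℤ)-1) ((0:ℕ):ℤ) = (m-1).choose 0 := ch_cast_s5 m 0 hm (by omega)
    rw [cc, c']
    rw [show ((0:ℕ):ℤ) = (0:ℤ) from rfl] at h1
    simp only [Nat.cast_zero, h2, h1]
    simp
  | 1 =>
    have hm2 : 2 ≤ m := by omega
    have h2 : ch ((m:ℤ)-1) ((1:ℕ):ℤ) - ch ((m:ℤ)-1) (((1:ℕ):ℤ)-2) = ch ((m:ℤ)-1) ((1:ℕ):ℤ) := by
      rw [ch_neg ((m:ℤ)-1) (((1:ℕ):ℤ)-2) (by norm_num)]; ring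
    rw [cc, c', h2, ch_cast_s5 m 1 hm (by omega), Nat.choose_one_right, Nat.choose_one_right]
    rw [if_neg (by omega)]
    simp only [Nat.sub_self, pow_one]
    push_cast [Nat.cast_sub hm]
    simp
  | (r+2) =>
    have hrm2 : r + 2 ≤ m - 1 := by omega
    have e1 : ch ((m:ℤ)-1) (((r+2:ℕ)):ℤ) = (m-1).choose (r+2) := ch_cast_s5 m (r+2) hm hrm2
    have e2 : ch ((m:ℤ)-1) (((r+2:ℕ):ℤ)-2) = (m-1).choose r := by
      rw [show ((r+2:ℕ):ℤ)-2 = ((r:ℕ):ℤ) from by push_cast; ring]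
      exact ch_cast_s5 m r hm (by omega)
    rw [cc, c', e1, e2, if_neg (by omega)]
    rw [show r+2-1 = r+1 from rfl]
    rw [show m.choose (r+2) = (m-1).choose (r+1) + (m-1).choose (r+2) from pascal m (r+1) hm]
    rw [show m.choose (r+1) = (m-1).choose r + (m-1).choose (r+1) from pascal m r hm]
    push_cast
    ring

lemma c'_symm (m r : ℕ) (hm : 0 < m) (hr : r ≤ m/2) (hme : Even m) : c' m (m+1-r) = c' m r := by
  have hpar : m % 2 = 0 := Nat.even_iff.mp hme
  have hrm : r ≤ m := by omega
  have hsign : (-1:ℝ)^(m+1-r) = -(-1:ℝ)^r := by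
    rcases Nat.even_or_odd r with h | h
    · have h2 : Odd (m+1-r) := by
        rw [Nat.odd_iff]; rw [Nat.even_iff] at h; omega
      rw [h2.neg_one_pow, h.neg_one_pow]
    · have h2 : Even (m+1-r) := by
        rw [Nat.even_iff]; rw [Nat.odd_iff] at h; omega
      rw [h2.neg_one_pow, h.neg_one_pow]; ring
  match r with
  | 0 =>
    have h0 : m.choose (m+1) = 0 := Nat.choose_eq_zero_of_lt (by omega)
    have hsign' : (-1:ℝ)^(m+1) = -(-1:ℝ)^(0:ℕ) := by simpa using hsign
    rw [c', c', Nat.sub_zero, hsign', h0, if_neg (by omega), if_pos rfl]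
    simp [Nat.choose_self, Nat.add_sub_cancel]
  | (r+1) =>
    have hmr : m + 1 - (r+1) = m - r := by omega
    have hc1 : m.choose (m-r) = m.choose r := Nat.choose_symm (by omega : r ≤ m)
    have hc2 : m.choose (m-r-1) = m.choose (r+1) := by
      rw [show m-r-1 = m-(r+1) from by omega]
      exact Nat.choose_symm (by omega)
    have hsign' : (-1:ℝ)^(m-r) = -(-1:ℝ)^(r+1) := by rw [← hmr]; exact hsign
    rw [c', c', hmr, hsign', hc1, if_neg (by omega), if_neg (by omega)]
    rw [show m-r-1 = m-r-1 from rfl] at hc2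
    rw [show (m-r)-1 = m-r-1 from rfl, hc2, show r+1-1 = r from rfl]
    ring

lemma keypoly (m : ℕ) (x : ℝ) :
    (1+x)*(1-x)^m = ∑ i ∈ range (m+2), c' m i * x^i := by
  have hb : (1-x)^m = ∑ j ∈ range (m+1), (-1:ℝ)^j * (m.choose j : ℝ) * x^j := by
    rw [show (1:ℝ)-x = -x + 1 from by ring, add_pow]
    apply Finset.sum_congr rfl
    intro j _
    rw [one_pow, neg_pow]
    ring
  have hr : ∑ i ∈ range (m+2), c' m i * x^i
      = ∑ i ∈ range (m+2), (-1:ℝ)^i * (m.choose i : ℝ) * x^i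
        + ∑ i ∈ range (m+2), (-(-1:ℝ)^i * (if i = 0 then (0:ℝ) else (m.choose (i-1) : ℝ)) * x^i) := by
    rw [← Finset.sum_add_distrib]
    apply Finset.sum_congr rfl
    intro i _
    rw [c']
    ring
  have h1 : ∑ i ∈ range (m+2), (-1:ℝ)^i * (m.choose i : ℝ) * x^i
      = ∑ j ∈ range (m+1), (-1:ℝ)^j * (m.choose j : ℝ) * x^j := by
    rw [Finset.sum_range_succ, Nat.choose_eq_zero_of_lt (by omega)]
    simp
  have h2 : ∑ i ∈ range (m+2), (-(-1:ℝ)^i * (if i = 0 then (0:ℝ) else (m.choose (i-1) : ℝ)) * x^i)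
      = ∑ j ∈ range (m+1), (-1:ℝ)^j * (m.choose j : ℝ) * (x * x^j) := by
    rw [Finset.sum_range_succ' (fun i => (-(-1:ℝ)^i * (if i = 0 then (0:ℝ) else (m.choose (i-1) : ℝ)) * x^i)) (m+1)]
    norm_num
    rw [← Finset.sum_neg_distrib]
    apply Finset.sum_congr rfl
    intro j _
    rw [pow_succ, pow_succ]
    ring
  rw [hr, h1, h2, hb, Finset.mul_sum, ← Finset.sum_add_distrib]
  apply Finset.sum_congr rfl
  intro j _
  ring

lemma keypoly2 (m : ℕ) (hm : 0 < m) (hme : Even m) (x : ℝ) :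
    (1+x)*(1-x)^m = ∑ r ∈ range (m/2+1), cc m r * (x^r + x^(m+1-r)) := by
  have hpar : m % 2 = 0 := Nat.even_iff.mp hme
  rw [keypoly]
  have h2 : m+2 = (m/2+1) + (m/2+1) := by omega
  rw [h2, Finset.sum_range_add]
  have h3 : ∑ i ∈ range (m/2+1), c' m (m/2+1+i) * x^(m/2+1+i)
      = ∑ r ∈ range (m/2+1), c' m (m+1-r) * x^(m+1-r) := by
    rw [← Finset.sum_range_reflect (fun i => c' m (m/2+1+i) * x^(m/2+1+i)) (m/2+1)]
    apply Finset.sum_congr rfl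
    intro j hj
    simp only [mem_range] at hj
    congr 2 <;> omega
  rw [h3, ← Finset.sum_add_distrib]
  apply Finset.sum_congr rfl
  intro r hr
  simp only [mem_range] at hr
  rw [c'_symm m r hm (by omega) hme, ← cc_eq_c' m r hm (by omega) hme]
  ring

lemma sumzero (m : ℕ) (hm : 0 < m) (hme : Even m) : ∑ r ∈ range (m/2+1), cc m r = 0 := by
  have hpar : m % 2 = 0 := Nat.even_iff.mp hme
  have hm2 : 2 ≤ m := by omega
  set f : ℕ → ℝ := fun i => if i = 0 then 0 else
    (-1:ℝ)^(i-1) * (((m-1).choose (i-1) : ℝ) - if i = 1 then 0 else ((m-1).choose (i-2) : ℝ)) with hf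
  have key : ∀ r, r ≤ m/2 → c' m r = f (r+1) - f r := by
    intro r hr
    match r with
    | 0 => simp [hf, c']
    | 1 =>
      have hm1 : ((m-1 : ℕ) : ℝ) = (m : ℝ) - 1 := by
        have := Nat.cast_sub (R := ℝ) hm
        simpa using this
      simp only [hf, c']
      norm_num [Nat.choose_one_right, hm1]
    | (r+2) =>
      simp only [hf, c', if_neg (by omega : ¬ r+3 = 0), if_neg (by omega : ¬ r+2 = 0),
        if_neg (by omega : ¬ r+3 = 1), if_neg (by omega : ¬ r+2 = 1)]
      simp only [Nat.add_sub_cancel, show r+3-1 = r+2 from rfl, show r+3-2 = r+1 from rfl,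
        show r+2-1 = r+1 from rfl, show r+2-2 = r from rfl]
      rw [show m.choose (r+2) = (m-1).choose (r+1) + (m-1).choose (r+2) from pascal m (r+1) hm]
      rw [show m.choose (r+1) = (m-1).choose r + (m-1).choose (r+1) from pascal m r hm]
      push_cast
      ring
  have hsum : ∑ r ∈ range (m/2+1), cc m r = ∑ r ∈ range (m/2+1), (f (r+1) - f r) := by
    apply Finset.sum_congr rfl
    intro r hr
    simp only [mem_range] at hr
    rw [cc_eq_c' m r hm (by omega) hme, key r (by omega)]
  rw [hsum, Finset.sum_range_sub]
  have hlast : f (m/2+1) = 0 := by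
    have hsym : (m-1).choose (m/2) = (m-1).choose (m/2-1) := by
      have : (m-1) - (m/2) = m/2 - 1 := by omega
      rw [← this]
      exact (Nat.choose_symm (show m/2 ≤ m-1 by omega)).symm
    simp only [hf, if_neg (by omega : ¬ m/2+1 = 0), if_neg (by omega : ¬ m/2+1 = 1),
      Nat.add_sub_cancel, show m/2+1-2 = m/2-1 from by omega, hsym]
    ring
  rw [hlast]
  simp [hf]

lemma combo (m n r : ℕ) (hn : 0 < n) (hr : 2*r ≤ m) (p : ℝ) (hp0 : 0 < p) (hp1 : p < 1) :
    ∑ k ∈ Icc 1 n, ((p^(2*k))^r + (p^(2*k))^(m+1-r)) * p^((m+1)*(n-k))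
      = p^(2*n*r) * (1 - p^((m+1-2*r)*(2*n+1))) / (1 - p^(m+1-2*r)) - p^((m+1)*n) := by
  set s : ℕ := m+1-2*r with hs
  set q : ℝ := p^s with hq
  have hs1 : 1 ≤ s := by omega
  have hql : q < 1 := pow_lt_one₀ hp0.le hp1 (by omega)
  have hq1 : q ≠ 1 := ne_of_lt hql
  have hA : ∀ k ∈ Icc 1 n, (p^(2*k))^r * p^((m+1)*(n-k)) = p^(2*n*r) * q^(n-k) := by
    intro k hk
    simp only [mem_Icc] at hk
    rw [hq, ← pow_mul, ← pow_mul, ← pow_add, ← pow_add]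
    congr 1
    zify [hk.2, (show 2*r ≤ m+1 by omega), hs]
    ring
  have hB : ∀ k ∈ Icc 1 n, (p^(2*k))^(m+1-r) * p^((m+1)*(n-k)) = p^((m+1)*n) * q^k := by
    intro k hk
    simp only [mem_Icc] at hk
    rw [hq, ← pow_mul, ← pow_mul, ← pow_add, ← pow_add]
    congr 1
    zify [hk.2, (show r ≤ m+1 by omega), (show 2*r ≤ m+1 by omega), hs]
    ring
  have hP : p^((m+1)*n) = p^(2*n*r) * q^n := by
    rw [hq, ← pow_mul, ← pow_add]
    congr 1
    zify [(show 2*r ≤ m+1 by omega), hs]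
    ring
  have hQ : p^((m+1-2*r)*(2*n+1)) = q^(2*n+1) := by rw [hq, ← pow_mul]
  calc ∑ k ∈ Icc 1 n, ((p^(2*k))^r + (p^(2*k))^(m+1-r)) * p^((m+1)*(n-k))
      = ∑ k ∈ Icc 1 n, ((p^(2*k))^r * p^((m+1)*(n-k)) + (p^(2*k))^(m+1-r) * p^((m+1)*(n-k))) := by
        apply Finset.sum_congr rfl; intro k _; ring
    _ = ∑ k ∈ Icc 1 n, p^(2*n*r) * q^(n-k) + ∑ k ∈ Icc 1 n, p^((m+1)*n) * q^k := by
        rw [Finset.sum_add_distrib]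
        congr 1
        · exact Finset.sum_congr rfl hA
        · exact Finset.sum_congr rfl hB
    _ = p^(2*n*r) * ((q^n - 1)/(q-1)) + p^((m+1)*n) * (q * ((q^n - 1)/(q-1))) := by
        rw [← Finset.mul_sum, ← Finset.mul_sum, sum_Icc_rev, geom_sum_eq hq1]
        congr 1
        rw [sum_Icc_one]
        rw [show ∑ i ∈ range n, q^(1+i) = ∑ i ∈ range n, q * q^i from
          Finset.sum_congr rfl (fun i _ => by rw [pow_add, pow_one])]
        rw [← Finset.mul_sum, geom_sum_eq hq1]
    _ = p^(2*n*r) * (1 - p^((m+1-2*r)*(2*n+1))) / (1 - p^(m+1-2*r)) - p^((m+1)*n) := by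
        rw [hQ, hP, ← hq]
        have hq1' : q - 1 ≠ 0 := sub_ne_zero.mpr hq1
        have hq1'' : 1 - q ≠ 0 := sub_ne_zero.mpr (ne_of_lt hql).symm
        field_simp
        ring

theorem stmt5 (m n : ℕ) (hm : 0 < m) (hme : Even m) (hn : 0 < n) (p : ℝ)
    (hp0 : 0 < p) (hp1 : p < 1) :
    (∑ k ∈ Finset.Icc 1 n,
        ((1 - p ^ (4 * k)) / (1 - p ^ 4)) * ((1 - p ^ (2 * k)) / (1 - p ^ 2)) ^ (m - 1) *
          p ^ ((m + 1) * (n - k))) =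
      ∑ r ∈ Finset.range (m / 2 + 1),
        (-1 : ℝ) ^ r * ((ch ((m : ℤ) - 1) (r : ℤ) - ch ((m : ℤ) - 1) ((r : ℤ) - 2) : ℤ) : ℝ) *
          ((1 - p ^ ((m + 1 - 2 * r) * (2 * n + 1))) * p ^ (2 * n * r)) /
          ((1 - p ^ 4) * (1 - p ^ 2) ^ (m - 1) * (1 - p ^ (m + 1 - 2 * r))) := by
  have hp2 : (1:ℝ) - p^2 ≠ 0 := sub_ne_zero.mpr (ne_of_lt (pow_lt_one₀ hp0.le hp1 (by omega))).symm
  have hp4 : (1:ℝ) - p^4 ≠ 0 := sub_ne_zero.mpr (ne_of_lt (pow_lt_one₀ hp0.le hp1 (by omega))).symm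
  set D : ℝ := (1 - p^4) * (1 - p^2)^(m-1) with hD
  have hDne : D ≠ 0 := mul_ne_zero hp4 (pow_ne_zero _ hp2)
  -- Step 1: rewrite each summand
  have step1 : (∑ k ∈ Finset.Icc 1 n,
        ((1 - p ^ (4 * k)) / (1 - p ^ 4)) * ((1 - p ^ (2 * k)) / (1 - p ^ 2)) ^ (m - 1) *
          p ^ ((m + 1) * (n - k)))
      = ∑ k ∈ Icc 1 n, ((1 + p^(2*k)) * (1 - p^(2*k))^m * p^((m+1)*(n-k))) / D := by
    apply Finset.sum_congr rfl
    intro k _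
    rw [div_pow, hD]
    rw [show (1:ℝ) - p^(4*k) = (1 - p^(2*k)) * (1 + p^(2*k)) from by
      rw [show 4*k = 2*k+2*k from by ring, pow_add]; ring]
    rw [show (1 - p^(2*k))^m = (1 - p^(2*k)) * (1 - p^(2*k))^(m-1) from by
      rw [← pow_succ']; congr 1; omega]
    field_simp
  -- Step 2: binomial expansion and swap
  have step2 : ∑ k ∈ Icc 1 n, ((1 + p^(2*k)) * (1 - p^(2*k))^m * p^((m+1)*(n-k))) / D
      = ∑ r ∈ range (m/2+1), cc m r *
          (∑ k ∈ Icc 1 n, ((p^(2*k))^r + (p^(2*k))^(m+1-r)) * p^((m+1)*(n-k))) / D := by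
    rw [show ∑ k ∈ Icc 1 n, ((1 + p^(2*k)) * (1 - p^(2*k))^m * p^((m+1)*(n-k))) / D
        = ∑ k ∈ Icc 1 n, ∑ r ∈ range (m/2+1),
            cc m r * (((p^(2*k))^r + (p^(2*k))^(m+1-r)) * p^((m+1)*(n-k))) / D from by
      apply Finset.sum_congr rfl
      intro k _
      rw [keypoly2 m hm hme (p^(2*k)), Finset.sum_mul, Finset.sum_div]
      apply Finset.sum_congr rfl
      intro r _
      ring]
    rw [Finset.sum_comm]
    apply Finset.sum_congr rfl
    intro r _
    rw [Finset.mul_sum, Finset.sum_div]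
  rw [step1, step2]
  -- Step 3: evaluate the inner geometric sums
  have step3 : ∀ r ∈ range (m/2+1), cc m r *
        (∑ k ∈ Icc 1 n, ((p^(2*k))^r + (p^(2*k))^(m+1-r)) * p^((m+1)*(n-k))) / D
      = (-1 : ℝ) ^ r * ((ch ((m : ℤ) - 1) (r : ℤ) - ch ((m : ℤ) - 1) ((r : ℤ) - 2) : ℤ) : ℝ) *
          ((1 - p ^ ((m + 1 - 2 * r) * (2 * n + 1))) * p ^ (2 * n * r)) /
          ((1 - p ^ 4) * (1 - p ^ 2) ^ (m - 1) * (1 - p ^ (m + 1 - 2 * r)))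
        - cc m r * p^((m+1)*n) / D := by
    intro r hr
    simp only [mem_range] at hr
    have hpar : m % 2 = 0 := Nat.even_iff.mp hme
    rw [combo m n r hn (by omega) p hp0 hp1]
    have hs : (1:ℝ) - p^(m+1-2*r) ≠ 0 :=
      sub_ne_zero.mpr (ne_of_lt (pow_lt_one₀ hp0.le hp1 (by omega))).symm
    rw [cc, hD]
    field_simp
  rw [Finset.sum_congr rfl step3, Finset.sum_sub_distrib]
  have step4 : ∑ r ∈ range (m/2+1), cc m r * p^((m+1)*n) / D = 0 := by
    rw [← Finset.sum_div, ← Finset.sum_mul, sumzero m hm hme]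
    simp
  rw [step4, sub_zero]
end

section
/- For all positive integers m and n, the identity T_{2m,n}(q) = Σ_{r=0}^{m-1} (-1)^r C(2m,r) · (1-q^{n(m-r)}) (1-q^{(n+1)(m-r)}) q^{rn} / ( (1-q)^{2m} (1+q^{m-r}) ) holds. -/
open Finset

private lemma alt_partial (n k : ℕ) :
    ∑ r ∈ range (k + 1), (-1 : ℝ) ^ r * ((n + 1).choose r : ℝ) =
      (-1) ^ k * (n.choose k : ℝ) := by
  induction k with
  | zero => simp
  | succ k ih =>
    rw [Finset.sum_range_succ, ih, Nat.choose_succ_succ]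
    push_cast
    ring

private lemma key_identity (m' : ℕ) (x : ℝ) :
    ∑ r ∈ range (m' + 1),
        (-1 : ℝ) ^ r * ((2 * (m' + 1)).choose r : ℝ) * ((1 - x ^ (m' + 1 - r)) ^ 2 * x ^ r) =
      (1 - x) ^ (2 * (m' + 1)) := by
  set m : ℕ := m' + 1 with hm
  have hm1 : 1 ≤ m := by omega
  -- full binomial expansion
  have hbin : (1 - x) ^ (2 * m) =
      ∑ j ∈ range (2 * m + 1), (-1 : ℝ) ^ j * ((2 * m).choose j : ℝ) * x ^ j := by
    rw [sub_eq_add_neg, add_comm, add_pow]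
    refine Finset.sum_congr rfl fun j hj => ?_
    rw [neg_pow]
    ring
  -- split the full sum
  have hsplit : ∑ j ∈ range (2 * m + 1), (-1 : ℝ) ^ j * ((2 * m).choose j : ℝ) * x ^ j =
      (∑ j ∈ range m, (-1 : ℝ) ^ j * ((2 * m).choose j : ℝ) * x ^ j) +
        (-1 : ℝ) ^ m * ((2 * m).choose m : ℝ) * x ^ m +
        ∑ j ∈ range m, (-1 : ℝ) ^ (m + 1 + j) * ((2 * m).choose (m + 1 + j) : ℝ) * x ^ (m + 1 + j) := by
    have h1 : range (2 * m + 1) = Finset.Ico 0 (2 * m + 1) := by rw [Finset.range_eq_Ico]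
    rw [h1, ← Finset.sum_Ico_consecutive _ (Nat.zero_le (m + 1)) (by omega : m + 1 ≤ 2 * m + 1)]
    rw [← Finset.range_eq_Ico, Finset.sum_range_succ]
    congr 1
    rw [Finset.sum_Ico_eq_sum_range]
    have h2 : 2 * m + 1 - (m + 1) = m := by omega
    rw [h2]
  -- the reflected tail equals the x^(2m-r) sum
  have htail : ∑ j ∈ range m, (-1 : ℝ) ^ (m + 1 + j) * ((2 * m).choose (m + 1 + j) : ℝ) * x ^ (m + 1 + j) =
      ∑ r ∈ range m, (-1 : ℝ) ^ r * ((2 * m).choose r : ℝ) * x ^ (2 * m - r) := by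
    rw [← Finset.sum_range_reflect (fun r => (-1 : ℝ) ^ r * ((2 * m).choose r : ℝ) * x ^ (2 * m - r)) m]
    refine Finset.sum_congr rfl fun j hj => ?_
    have hj' : j < m := Finset.mem_range.mp hj
    have e1 : 2 * m - (m - 1 - j) = m + 1 + j := by omega
    have e2 : (2 * m).choose (m + 1 + j) = (2 * m).choose (m - 1 - j) := by
      rw [← Nat.choose_symm (by omega : m + 1 + j ≤ 2 * m)]
      congr 1
      omega
    have e3 : (-1 : ℝ) ^ (m + 1 + j) = (-1 : ℝ) ^ (m - 1 - j) := by
      have h4 : m + 1 + j = (m - 1 - j) + 2 * (j + 1) := by omega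
      rw [h4, pow_add, pow_mul]
      norm_num
    rw [e1, e2, e3]
  -- partial alternating sum
  have hS0 : ∑ r ∈ range m, (-1 : ℝ) ^ r * ((2 * m).choose r : ℝ) =
      (-1 : ℝ) ^ m' * ((2 * m' + 1).choose m' : ℝ) := by
    have := alt_partial (2 * m' + 1) m'
    have h5 : 2 * m' + 1 + 1 = 2 * m := by omega
    rw [h5] at this
    exact this
  -- central binomial coefficient relation
  have hC : ((2 * m).choose m : ℝ) = 2 * ((2 * m' + 1).choose m' : ℝ) := by
    have h6 : (2 * m).choose m = (2 * m' + 1).choose m' + (2 * m' + 1).choose (m' + 1) := by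
      have : 2 * m = (2 * m' + 1) + 1 := by omega
      rw [this, hm, Nat.choose_succ_succ]
    have h7 : (2 * m' + 1).choose (m' + 1) = (2 * m' + 1).choose m' := by
      rw [← Nat.choose_symm (by omega : m' + 1 ≤ 2 * m' + 1)]
      congr 1
      omega
    rw [h6, h7]
    push_cast
    ring
  -- expand each term
  have hexp : ∑ r ∈ range m,
      (-1 : ℝ) ^ r * ((2 * m).choose r : ℝ) * ((1 - x ^ (m - r)) ^ 2 * x ^ r) =
      (∑ r ∈ range m, (-1 : ℝ) ^ r * ((2 * m).choose r : ℝ) * x ^ r) -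
        2 * x ^ m * (∑ r ∈ range m, (-1 : ℝ) ^ r * ((2 * m).choose r : ℝ)) +
        ∑ r ∈ range m, (-1 : ℝ) ^ r * ((2 * m).choose r : ℝ) * x ^ (2 * m - r) := by
    rw [Finset.mul_sum, ← Finset.sum_sub_distrib, ← Finset.sum_add_distrib]
    refine Finset.sum_congr rfl fun r hr => ?_
    have hr' : r < m := Finset.mem_range.mp hr
    have h1 : x ^ (m - r) * x ^ r = x ^ m := by
      rw [← pow_add]; congr 1 <;> omega
    have h2 : x ^ (m - r) * x ^ (m - r) * x ^ r = x ^ (2 * m - r) := by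
      rw [← pow_add, ← pow_add]; congr 1 <;> omega
    have h3 : (1 - x ^ (m - r)) ^ 2 * x ^ r =
        x ^ r - 2 * (x ^ (m - r) * x ^ r) + x ^ (m - r) * x ^ (m - r) * x ^ r := by ring
    rw [h3, h1, h2]
    ring
  have hmm : (-1 : ℝ) ^ m = -(-1 : ℝ) ^ m' := by
    rw [hm, pow_succ]; ring
  rw [hexp, hS0, hbin, hsplit, htail, hC, hmm]
  ring

private lemma aux_alg (C a u v b D : ℝ) (hD : D ≠ 0) (ha : 1 + a ≠ 0) :
    C * ((1 - u * a) * (1 - u * a * a) * (v * b)) / (D * (1 + a)) +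
      b * a * (C * ((1 - u) * (1 - u * a) * v) / (D * (1 + a))) =
      C * ((1 - u * a) ^ 2 * (v * b)) / D := by
  field_simp
  ring

private lemma main_ind (m : ℕ) (hm : 0 < m) (q : ℝ) (hq0 : 0 < q) (hq1 : q < 1) (n : ℕ) :
    (∑ k ∈ Finset.Icc 1 n,
        (-1 : ℝ) ^ (n - k) * ((1 - q ^ k) / (1 - q)) ^ (2 * m) * q ^ (m * (n - k))) =
      ∑ r ∈ Finset.range m,
        (-1 : ℝ) ^ r * (Nat.choose (2 * m) r : ℝ) *
          ((1 - q ^ (n * (m - r))) * (1 - q ^ ((n + 1) * (m - r))) * q ^ (r * n)) /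
          ((1 - q) ^ (2 * m) * (1 + q ^ (m - r))) := by
  have hq1' : (0 : ℝ) < 1 - q := by linarith
  have hD : ((1 - q) ^ (2 * m) : ℝ) ≠ 0 := pow_ne_zero _ (by linarith)
  induction n with
  | zero => simp
  | succ n ih =>
    -- peel off the top term of the LHS
    rw [Finset.sum_Icc_succ_top (by omega : 1 ≤ n + 1)]
    have hshift : ∀ k ∈ Finset.Icc 1 n,
        (-1 : ℝ) ^ (n + 1 - k) * ((1 - q ^ k) / (1 - q)) ^ (2 * m) * q ^ (m * (n + 1 - k)) =
        (-q ^ m) * ((-1 : ℝ) ^ (n - k) * ((1 - q ^ k) / (1 - q)) ^ (2 * m) * q ^ (m * (n - k))) := by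
      intro k hk
      have hk' : k ≤ n := (Finset.mem_Icc.mp hk).2
      have e1 : n + 1 - k = (n - k) + 1 := by omega
      have e2 : m * (n + 1 - k) = m * (n - k) + m := by rw [e1]; ring
      rw [e2, pow_add, e1, pow_succ]
      ring
    rw [Finset.sum_congr rfl hshift, ← Finset.mul_sum, ih]
    simp only [Nat.sub_self, pow_zero, mul_zero, one_mul, mul_one]
    -- now show: -q^m * RHS n + A = RHS (n+1)
    rw [div_pow, eq_comm, ← sub_eq_iff_eq_add, sub_eq_iff_eq_add']
    -- i.e. RHS (n+1) + q^m * RHS n = (1-q^(n+1))^(2m)/(1-q)^(2m)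
    have hcomb : ∑ r ∈ Finset.range m,
        (-1 : ℝ) ^ r * (Nat.choose (2 * m) r : ℝ) *
          ((1 - q ^ ((n + 1) * (m - r))) * (1 - q ^ ((n + 1 + 1) * (m - r))) * q ^ (r * (n + 1))) /
          ((1 - q) ^ (2 * m) * (1 + q ^ (m - r))) +
        q ^ m * ∑ r ∈ Finset.range m,
        (-1 : ℝ) ^ r * (Nat.choose (2 * m) r : ℝ) *
          ((1 - q ^ (n * (m - r))) * (1 - q ^ ((n + 1) * (m - r))) * q ^ (r * n)) /
          ((1 - q) ^ (2 * m) * (1 + q ^ (m - r))) =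
        ∑ r ∈ Finset.range m,
        (-1 : ℝ) ^ r * (Nat.choose (2 * m) r : ℝ) *
          ((1 - (q ^ (n + 1)) ^ (m - r)) ^ 2 * (q ^ (n + 1)) ^ r) / (1 - q) ^ (2 * m) := by
      rw [Finset.mul_sum, ← Finset.sum_add_distrib]
      refine Finset.sum_congr rfl fun r hr => ?_
      have hr' : r < m := Finset.mem_range.mp hr
      have ha : (1 : ℝ) + q ^ (m - r) ≠ 0 := by positivity
      have e1 : q ^ ((n + 1) * (m - r)) = q ^ (n * (m - r)) * q ^ (m - r) := by
        rw [← pow_add]; congr 1 <;> ring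
      have e2 : q ^ ((n + 1 + 1) * (m - r)) = q ^ (n * (m - r)) * q ^ (m - r) * q ^ (m - r) := by
        rw [← pow_add, ← pow_add]; congr 1 <;> ring
      have e3 : q ^ (r * (n + 1)) = q ^ (r * n) * q ^ r := by
        rw [← pow_add]; congr 1 <;> ring
      have e4 : (q : ℝ) ^ m = q ^ r * q ^ (m - r) := by
        rw [← pow_add]; congr 1 <;> omega
      have e5 : (q ^ (n + 1)) ^ (m - r) = q ^ (n * (m - r)) * q ^ (m - r) := by
        rw [← pow_mul, ← pow_add]; congr 1 <;> ring
      have e6 : (q ^ (n + 1)) ^ r = q ^ (r * n) * q ^ r := by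
        rw [← pow_mul, ← pow_add]; congr 1 <;> ring
      rw [e1, e2, e3, e4, e5, e6]
      exact aux_alg _ (q ^ (m - r)) (q ^ (n * (m - r))) (q ^ (r * n)) (q ^ r) _ hD ha
    have hkey := key_identity (m - 1) (q ^ (n + 1))
    have hm' : m - 1 + 1 = m := by omega
    rw [hm'] at hkey
    rw [← Finset.sum_div, hkey] at hcomb
    linarith [hcomb]

theorem stmt6 (m n : ℕ) (hm : 0 < m) (hn : 0 < n) (q : ℝ) (hq0 : 0 < q) (hq1 : q < 1) :
    (∑ k ∈ Finset.Icc 1 n,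
        (-1 : ℝ) ^ (n - k) * ((1 - q ^ k) / (1 - q)) ^ (2 * m) * q ^ (m * (n - k))) =
      ∑ r ∈ Finset.range m,
        (-1 : ℝ) ^ r * (Nat.choose (2 * m) r : ℝ) *
          ((1 - q ^ (n * (m - r))) * (1 - q ^ ((n + 1) * (m - r))) * q ^ (r * n)) /
          ((1 - q) ^ (2 * m) * (1 + q ^ (m - r))) := by
  exact main_ind m hm q hq0 hq1 n
end

section
/- For every nonnegative integer m, the polynomial identity 1 - x^{m+1} y^{m+1} = (1-xy) · Σ_{r=0}^{m} Σ_{s=0}^{m-r} C(m-r, s) C(m-s, r) · x^r y^s (1-x)^{m-r-s} (1-y)^{m-r-s} holds in ℤ[x,y]. -/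
open Finset

/-- General double sum `g p q`. For `p = q = m` it is the sum in the theorem. -/
def gg {R : Type*} [CommRing R] (x y : R) (p q : ℕ) : R :=
  ∑ r ∈ Finset.range (p + 1), ∑ s ∈ Finset.range (p - r + 1),
    (((q - r).choose s * (p - s).choose r : ℕ) : R) *
      (x ^ r * y ^ s * (1 - x) ^ (p - r - s) * (1 - y) ^ (q - r - s))

/-- first summand after Pascal on the second binomial -/
def t1 {R : Type*} [CommRing R] (x y : R) (p q r s : ℕ) : R :=
  (((q + 1 - r).choose s * (p - s).choose r : ℕ) : R) *
    (x ^ r * y ^ s * (1 - x) ^ (p + 1 - r - s) * (1 - y) ^ (q + 1 - r - s))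

/-- second summand after Pascal on the second binomial -/
def t2 {R : Type*} [CommRing R] (x y : R) (p q r s : ℕ) : R :=
  if r = 0 then 0 else
  (((q + 1 - r).choose s * (p - s).choose (r - 1) : ℕ) : R) *
    (x ^ r * y ^ s * (1 - x) ^ (p + 1 - r - s) * (1 - y) ^ (q + 1 - r - s))

/-- first summand after Pascal on the first binomial -/
def u1 {R : Type*} [CommRing R] (x y : R) (p q r s : ℕ) : R :=
  (((q + 1 - r).choose s * (p + 1 - s).choose r : ℕ) : R) *
    (x ^ r * y ^ s * (1 - x) ^ (p + 1 - r - s) * (1 - y) ^ (q + 1 + 1 - r - s))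

/-- second summand after Pascal on the first binomial -/
def u2 {R : Type*} [CommRing R] (x y : R) (p q r s : ℕ) : R :=
  if s = 0 then 0 else
  (((q + 1 - r).choose (s - 1) * (p + 1 - s).choose r : ℕ) : R) *
    (x ^ r * y ^ s * (1 - x) ^ (p + 1 - r - s) * (1 - y) ^ (q + 1 + 1 - r - s))

lemma lemA {R : Type*} [CommRing R] (x y : R) (p q : ℕ) (hpq : p ≤ q) :
    gg x y (p + 1) (q + 1) =
      (1 - x) * gg x y p (q + 1) + x * gg x y p q +
        (((q + 1).choose (p + 1) : ℕ) : R) * (y ^ (p + 1) * (1 - y) ^ (q - p)) := by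
  have hsplit : gg x y (p + 1) (q + 1)
      = (∑ r ∈ range (p + 1 + 1), ∑ s ∈ range (p + 1 - r + 1), t1 x y p q r s)
        + (∑ r ∈ range (p + 1 + 1), ∑ s ∈ range (p + 1 - r + 1), t2 x y p q r s) := by
    rw [← Finset.sum_add_distrib]
    unfold gg
    refine Finset.sum_congr rfl fun r hr => ?_
    rw [← Finset.sum_add_distrib]
    refine Finset.sum_congr rfl fun s hs => ?_
    rcases r with _ | r
    · simp [t1, t2]
    · have hr' : r + 1 < p + 1 + 1 := Finset.mem_range.mp hr
      have hs' : s < p + 1 - (r + 1) + 1 := Finset.mem_range.mp hs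
      have h1 : p + 1 - s = (p - s) + 1 := by omega
      have h2 : q + 1 - (r + 1) + 1 = q + 1 - r := by omega
      simp only [t1, t2, if_neg (Nat.succ_ne_zero r), Nat.add_sub_cancel]
      rw [h1, Nat.choose_succ_succ]
      push_cast
      ring
  have hT1 : (∑ r ∈ range (p + 1 + 1), ∑ s ∈ range (p + 1 - r + 1), t1 x y p q r s)
      = (1 - x) * gg x y p (q + 1)
        + (((q + 1).choose (p + 1) : ℕ) : R) * (y ^ (p + 1) * (1 - y) ^ (q - p)) := by
    rw [Finset.sum_range_succ]
    have hlastrange : p + 1 - (p + 1) + 1 = 1 := by omega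
    have hlast : (∑ s ∈ range (p + 1 - (p + 1) + 1), t1 x y p q (p + 1) s) = 0 := by
      rw [hlastrange, Finset.sum_range_one]
      simp [t1, Nat.choose_succ_self]
    rw [hlast, add_zero]
    have hpeel : ∀ r ∈ range (p + 1),
        (∑ s ∈ range (p + 1 - r + 1), t1 x y p q r s)
          = (∑ s ∈ range (p - r + 1), t1 x y p q r s) + t1 x y p q r (p + 1 - r) := by
      intro r hr
      have hr' : r ≤ p := by have := Finset.mem_range.mp hr; omega
      rw [Finset.sum_range_succ]
      have : p + 1 - r = p - r + 1 := by omega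
      rw [this]
    rw [Finset.sum_congr rfl hpeel, Finset.sum_add_distrib]
    have hbd : (∑ r ∈ range (p + 1), t1 x y p q r (p + 1 - r))
        = (((q + 1).choose (p + 1) : ℕ) : R) * (y ^ (p + 1) * (1 - y) ^ (q - p)) := by
      rw [Finset.sum_eq_single_of_mem 0 (Finset.mem_range.mpr (Nat.succ_pos p))]
      · have e3 : p + 1 - (p + 1) = 0 := by omega
        have e4 : q + 1 - (p + 1) = q - p := by omega
        simp only [t1, Nat.sub_zero]
        rw [e3, e4]
        simp only [Nat.choose_zero_right, mul_one, pow_zero, one_mul]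
      · intro r hr hr0
        have hr' : r ≤ p := by have := Finset.mem_range.mp hr; omega
        have hch : (p - (p + 1 - r)).choose r = 0 := by
          apply Nat.choose_eq_zero_of_lt
          omega
        simp [t1, hch]
    rw [hbd]
    congr 1
    unfold gg
    rw [Finset.mul_sum]
    refine Finset.sum_congr rfl fun r hr => ?_
    rw [Finset.mul_sum]
    refine Finset.sum_congr rfl fun s hs => ?_
    have hr' : r ≤ p := by have := Finset.mem_range.mp hr; omega
    have hs' : s ≤ p - r := by have := Finset.mem_range.mp hs; omega
    have h1 : p + 1 - r - s = (p - r - s) + 1 := by omega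
    simp only [t1, h1, pow_succ]
    ring
  have hT2 : (∑ r ∈ range (p + 1 + 1), ∑ s ∈ range (p + 1 - r + 1), t2 x y p q r s)
      = x * gg x y p q := by
    rw [Finset.sum_range_succ']
    have hz : (∑ s ∈ range (p + 1 - 0 + 1), t2 x y p q 0 s) = 0 := by
      simp [t2]
    rw [hz, add_zero]
    unfold gg
    rw [Finset.mul_sum]
    refine Finset.sum_congr rfl fun r hr => ?_
    have hr' : r ≤ p := by have := Finset.mem_range.mp hr; omega
    have hrange : p + 1 - (r + 1) + 1 = p - r + 1 := by omega
    rw [hrange, Finset.mul_sum]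
    refine Finset.sum_congr rfl fun s hs => ?_
    have hs' : s ≤ p - r := by have := Finset.mem_range.mp hs; omega
    have h1 : q + 1 - (r + 1) = q - r := by omega
    have h2 : p + 1 - (r + 1) - s = p - r - s := by omega
    have h3 : q + 1 - (r + 1) - s = q - r - s := by omega
    simp only [t2, if_neg (Nat.succ_ne_zero r), Nat.add_sub_cancel, h1, h2, h3]
    push_cast
    ring
  rw [hsplit, hT1, hT2]
  ring

lemma lemB {R : Type*} [CommRing R] (x y : R) (p q : ℕ) (hpq : p ≤ q) :
    gg x y (p + 1) (q + 1 + 1) =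
      (1 - y) * gg x y (p + 1) (q + 1) + y * gg x y p (q + 1) := by
  have hsplit : gg x y (p + 1) (q + 1 + 1)
      = (∑ r ∈ range (p + 1 + 1), ∑ s ∈ range (p + 1 - r + 1), u1 x y p q r s)
        + (∑ r ∈ range (p + 1 + 1), ∑ s ∈ range (p + 1 - r + 1), u2 x y p q r s) := by
    rw [← Finset.sum_add_distrib]
    unfold gg
    refine Finset.sum_congr rfl fun r hr => ?_
    rw [← Finset.sum_add_distrib]
    refine Finset.sum_congr rfl fun s hs => ?_
    have hr' : r ≤ p + 1 := by have := Finset.mem_range.mp hr; omega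
    rcases s with _ | s
    · have h1 : q + 1 + 1 - r = (q + 1 - r) + 1 := by omega
      simp [u1, u2]
    · have hs' : s + 1 ≤ p + 1 - r := by have := Finset.mem_range.mp hs; omega
      have h1 : q + 1 + 1 - r = (q + 1 - r) + 1 := by omega
      simp only [u1, u2, if_neg (Nat.succ_ne_zero s), Nat.add_sub_cancel]
      rw [h1, Nat.choose_succ_succ]
      push_cast
      ring
  have hU1 : (∑ r ∈ range (p + 1 + 1), ∑ s ∈ range (p + 1 - r + 1), u1 x y p q r s)
      = (1 - y) * gg x y (p + 1) (q + 1) := by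
    unfold gg
    rw [Finset.mul_sum]
    refine Finset.sum_congr rfl fun r hr => ?_
    rw [Finset.mul_sum]
    refine Finset.sum_congr rfl fun s hs => ?_
    have hr' : r ≤ p + 1 := by have := Finset.mem_range.mp hr; omega
    have hs' : s ≤ p + 1 - r := by have := Finset.mem_range.mp hs; omega
    have h1 : q + 1 + 1 - r - s = (q + 1 - r - s) + 1 := by omega
    simp only [u1, h1, pow_succ]
    ring
  have hU2 : (∑ r ∈ range (p + 1 + 1), ∑ s ∈ range (p + 1 - r + 1), u2 x y p q r s)
      = y * gg x y p (q + 1) := by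
    rw [Finset.sum_range_succ]
    have hlastrange : p + 1 - (p + 1) + 1 = 1 := by omega
    have hlast : (∑ s ∈ range (p + 1 - (p + 1) + 1), u2 x y p q (p + 1) s) = 0 := by
      rw [hlastrange, Finset.sum_range_one]
      simp [u2]
    rw [hlast, add_zero]
    unfold gg
    rw [Finset.mul_sum]
    refine Finset.sum_congr rfl fun r hr => ?_
    have hr' : r ≤ p := by have := Finset.mem_range.mp hr; omega
    have hrange : p + 1 - r + 1 = (p - r + 1) + 1 := by omega
    rw [hrange, Finset.sum_range_succ', Finset.mul_sum]
    have hz : u2 x y p q r 0 = 0 := by simp [u2]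
    rw [hz, add_zero]
    refine Finset.sum_congr rfl fun s hs => ?_
    have hs' : s ≤ p - r := by have := Finset.mem_range.mp hs; omega
    have h1 : p + 1 - (s + 1) = p - s := by omega
    have h2 : p + 1 - r - (s + 1) = p - r - s := by omega
    have h3 : q + 1 + 1 - r - (s + 1) = q + 1 - r - s := by omega
    simp only [u2, if_neg (Nat.succ_ne_zero s), Nat.add_sub_cancel, h1, h2, h3]
    push_cast
    ring
  rw [hsplit, hU1, hU2]

lemma gg_closed {R : Type*} [CommRing R] (x y : R) (m : ℕ) :
    gg x y m m = (∑ k ∈ range (m + 1), (x * y) ^ k) ∧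
      gg x y m (m + 1) = (∑ k ∈ range (m + 1), (x * y) ^ k)
        - y ^ (m + 1) * (∑ k ∈ range (m + 1), x ^ k) := by
  induction m with
  | zero =>
      constructor
      · simp [gg]
      · norm_num [gg]
  | succ m ih =>
      obtain ⟨ih1, ih2⟩ := ih
      have hx : (∑ k ∈ range (m + 1), x ^ k) * (x - 1) = x ^ (m + 1) - 1 :=
        geom_sum_mul x (m + 1)
      have hA := lemA x y m m le_rfl
      have h1 : gg x y (m + 1) (m + 1) = ∑ k ∈ range (m + 1 + 1), (x * y) ^ k := by
        rw [hA, ih1, ih2, Finset.sum_range_succ (fun k => (x * y) ^ k) (m + 1),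
          Nat.choose_self, Nat.sub_self]
        push_cast
        linear_combination (y ^ (m + 1)) * hx
      refine ⟨h1, ?_⟩
      have hB := lemB x y m m le_rfl
      rw [hB, h1, ih2, Finset.sum_range_succ (fun k => (x * y) ^ k) (m + 1),
        Finset.sum_range_succ (fun k => x ^ k) (m + 1)]
      ring
    
theorem stmt8 (m : ℕ) (R : Type*) [CommRing R] (x y : R) :
    1 - x ^ (m + 1) * y ^ (m + 1) =
      (1 - x * y) *
        ∑ r ∈ Finset.range (m + 1), ∑ s ∈ Finset.range (m - r + 1),
          (((m - r).choose s * (m - s).choose r : ℕ) : R) *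
            (x ^ r * y ^ s * (1 - x) ^ (m - r - s) * (1 - y) ^ (m - r - s)) := by
  have h := (gg_closed x y m).1
  unfold gg at h
  rw [h]
  have hxy : (∑ k ∈ range (m + 1), (x * y) ^ k) * (x * y - 1) = (x * y) ^ (m + 1) - 1 :=
    geom_sum_mul (x * y) (m + 1)
  linear_combination hxy
end

section
/- For every nonnegative integer m, the polynomial identity (1-xy) · Σ_{r=0}^{m} Σ_{s=0}^{m-r} C(m-r+1, s) C(m-s, r) · x^r y^s (1-x)^{m+1-r-s} (1-y)^{m+1-r-s} = 1 - x^{m+2} y^{m+2} - x(1 - x^{m+1} y^{m+1}) - (1-xy) y^{m+1} holds in ℤ[x,y]. -/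
open Finset

section Aux

variable {R : Type*} [CommRing R]

/-- F: triple antidiagonal sum, r-outer: p.1 = r, q = (s, t). -/
private def Fa (x y : R) (m : ℕ) : R :=
  ∑ p ∈ antidiagonal m, ∑ q ∈ antidiagonal p.2,
    (((q.1 + q.2 + 1).choose q.1 * (p.1 + q.2).choose p.1 : ℕ) : R) *
      (x ^ p.1 * y ^ q.1 * ((1 - x) * (1 - y)) ^ (q.2 + 1))

/-- G: same with first binomial lowered. -/
private def Ga (x y : R) (m : ℕ) : R :=
  ∑ p ∈ antidiagonal m, ∑ q ∈ antidiagonal p.2,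
    (((q.1 + q.2).choose q.1 * (p.1 + q.2).choose p.1 : ℕ) : R) *
      (x ^ p.1 * y ^ q.1 * ((1 - x) * (1 - y)) ^ (q.2 + 1))

private lemma swap23 (n : ℕ) (H : ℕ → ℕ → ℕ → R) :
    ∑ p ∈ antidiagonal n, ∑ q ∈ antidiagonal p.2, H p.1 q.1 q.2
      = ∑ p ∈ antidiagonal n, ∑ q ∈ antidiagonal p.2, H p.1 q.2 q.1 := by
  refine Finset.sum_congr rfl fun p _ => ?_
  simpa using (Finset.Nat.sum_antidiagonal_swap (f := fun q => H p.1 q.1 q.2)).symm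

private lemma swap12 (n : ℕ) (H : ℕ → ℕ → ℕ → R) :
    ∑ p ∈ antidiagonal n, ∑ q ∈ antidiagonal p.2, H p.1 q.1 q.2
      = ∑ p ∈ antidiagonal n, ∑ q ∈ antidiagonal p.2, H q.1 p.1 q.2 := by
  rw [Finset.sum_sigma', Finset.sum_sigma']
  refine Finset.sum_nbij' (fun v => ⟨(v.2.1, v.1.1 + v.2.2), (v.1.1, v.2.2)⟩)
    (fun v => ⟨(v.2.1, v.1.1 + v.2.2), (v.1.1, v.2.2)⟩) ?_ ?_ ?_ ?_ ?_
  · rintro ⟨⟨a, u⟩, b, c⟩ hv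
    simp only [Finset.mem_sigma, Finset.HasAntidiagonal.mem_antidiagonal] at hv ⊢
    exact ⟨by omega, trivial⟩
  · rintro ⟨⟨a, u⟩, b, c⟩ hv
    simp only [Finset.mem_sigma, Finset.HasAntidiagonal.mem_antidiagonal] at hv ⊢
    exact ⟨by omega, trivial⟩
  · rintro ⟨⟨a, u⟩, b, c⟩ hv
    simp only [Finset.mem_sigma, Finset.HasAntidiagonal.mem_antidiagonal] at hv
    have : b + c = u := hv.2
    subst this
    rfl
  · rintro ⟨⟨a, u⟩, b, c⟩ hv
    simp only [Finset.mem_sigma, Finset.HasAntidiagonal.mem_antidiagonal] at hv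
    have : b + c = u := hv.2
    subst this
    rfl
  · rintro ⟨⟨a, u⟩, b, c⟩ _
    rfl

/-- t-outer reorder: sum of H r s t = sum with t as outer index. -/
private lemma reorder_t (n : ℕ) (H : ℕ → ℕ → ℕ → R) :
    ∑ p ∈ antidiagonal n, ∑ q ∈ antidiagonal p.2, H p.1 q.1 q.2
      = ∑ p ∈ antidiagonal n, ∑ q ∈ antidiagonal p.2, H q.1 q.2 p.1 := by
  rw [swap23 n H, swap12 n (fun a b c => H a c b)]

private lemma bin1 (w y : R) (n : ℕ) :
    ∑ q ∈ antidiagonal n, (((q.1 + q.2).choose q.1 : ℕ) : R) * (y ^ q.1 * w ^ (q.2 + 1))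
      = w * (y + w) ^ n := by
  rw [Finset.Nat.sum_antidiagonal_eq_sum_range_succ_mk, add_pow, Finset.mul_sum]
  refine Finset.sum_congr rfl fun k hk => ?_
  rw [Finset.mem_range] at hk
  have h1 : k + (n - k) = n := by omega
  rw [h1]
  ring

private lemma bin2 (w y : R) (n : ℕ) :
    ∑ q ∈ antidiagonal n, (((q.1 + q.2 + 1).choose q.1 : ℕ) : R) * (y ^ q.1 * w ^ (q.2 + 1))
      = (y + w) ^ (n + 1) - y ^ (n + 1) := by
  have hp := add_pow y w (n + 1)
  rw [Finset.sum_range_succ, Nat.choose_self, Nat.sub_self] at hp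
  have key : (y + w) ^ (n + 1) - y ^ (n + 1)
      = ∑ k ∈ range (n + 1), y ^ k * w ^ (n + 1 - k) * ((n + 1).choose k : ℕ) := by
    rw [hp]; push_cast; ring
  rw [Finset.Nat.sum_antidiagonal_eq_sum_range_succ_mk, key]
  refine Finset.sum_congr rfl fun k hk => ?_
  rw [Finset.mem_range] at hk
  dsimp only
  have h1 : k + (n - k) = n := by omega
  have h2 : n - k + 1 = n + 1 - k := by omega
  rw [h1, h2]
  ring

private lemma Fa_souter (x y : R) (m : ℕ) :
    Fa x y m = ∑ p ∈ antidiagonal m, ∑ q ∈ antidiagonal p.2,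
      (((p.1 + q.2 + 1).choose p.1 * (q.1 + q.2).choose q.1 : ℕ) : R) *
        (x ^ q.1 * y ^ p.1 * ((1 - x) * (1 - y)) ^ (q.2 + 1)) := by
  unfold Fa
  exact swap12 m fun r s t => (((s + t + 1).choose s * (r + t).choose r : ℕ) : R) *
    (x ^ r * y ^ s * ((1 - x) * (1 - y)) ^ (t + 1))

private lemma Ga_souter (x y : R) (m : ℕ) :
    Ga x y m = ∑ p ∈ antidiagonal m, ∑ q ∈ antidiagonal p.2,
      (((p.1 + q.2).choose p.1 * (q.1 + q.2).choose q.1 : ℕ) : R) *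
        (x ^ q.1 * y ^ p.1 * ((1 - x) * (1 - y)) ^ (q.2 + 1)) := by
  unfold Ga
  exact swap12 m fun r s t => (((s + t).choose s * (r + t).choose r : ℕ) : R) *
    (x ^ r * y ^ s * ((1 - x) * (1 - y)) ^ (t + 1))

private lemma lemA_s9 (x y : R) (m : ℕ) :
    Fa x y (m + 1) = y * Fa x y m + Ga x y (m + 1) := by
  rw [Fa_souter x y (m + 1), Ga_souter x y (m + 1), Fa_souter x y m]
  conv_lhs => rw [Finset.Nat.sum_antidiagonal_succ]
  conv_rhs => rw [Finset.Nat.sum_antidiagonal_succ]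
  dsimp only
  have hE : ∀ q : ℕ × ℕ, (((0 + q.2 + 1).choose 0 * (q.1 + q.2).choose q.1 : ℕ) : R) *
      (x ^ q.1 * y ^ 0 * ((1 - x) * (1 - y)) ^ (q.2 + 1))
      = (((0 + q.2).choose 0 * (q.1 + q.2).choose q.1 : ℕ) : R) *
        (x ^ q.1 * y ^ 0 * ((1 - x) * (1 - y)) ^ (q.2 + 1)) := by
    intro q; simp [Nat.choose_zero_right]
  rw [Finset.sum_congr rfl fun q _ => hE q]
  have hsplit : (∑ p ∈ antidiagonal m, ∑ q ∈ antidiagonal p.2,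
        (((p.1 + 1 + q.2 + 1).choose (p.1 + 1) * (q.1 + q.2).choose q.1 : ℕ) : R) *
          (x ^ q.1 * y ^ (p.1 + 1) * ((1 - x) * (1 - y)) ^ (q.2 + 1)))
      = (∑ p ∈ antidiagonal m, ∑ q ∈ antidiagonal p.2,
          (((p.1 + q.2 + 1).choose p.1 * (q.1 + q.2).choose q.1 : ℕ) : R) *
            (x ^ q.1 * y ^ (p.1 + 1) * ((1 - x) * (1 - y)) ^ (q.2 + 1)))
        + (∑ p ∈ antidiagonal m, ∑ q ∈ antidiagonal p.2,
          (((p.1 + 1 + q.2).choose (p.1 + 1) * (q.1 + q.2).choose q.1 : ℕ) : R) *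
            (x ^ q.1 * y ^ (p.1 + 1) * ((1 - x) * (1 - y)) ^ (q.2 + 1))) := by
    rw [← Finset.sum_add_distrib]
    refine Finset.sum_congr rfl fun p _ => ?_
    rw [← Finset.sum_add_distrib]
    refine Finset.sum_congr rfl fun q _ => ?_
    have e1 : p.1 + 1 + q.2 + 1 = (p.1 + q.2 + 1) + 1 := by omega
    have e2 : p.1 + 1 + q.2 = p.1 + q.2 + 1 := by omega
    rw [e1, e2, Nat.choose_succ_succ (p.1 + q.2 + 1) p.1]
    push_cast
    ring
  rw [hsplit]
  have hy : (∑ p ∈ antidiagonal m, ∑ q ∈ antidiagonal p.2,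
        (((p.1 + q.2 + 1).choose p.1 * (q.1 + q.2).choose q.1 : ℕ) : R) *
          (x ^ q.1 * y ^ (p.1 + 1) * ((1 - x) * (1 - y)) ^ (q.2 + 1)))
      = y * ∑ p ∈ antidiagonal m, ∑ q ∈ antidiagonal p.2,
          (((p.1 + q.2 + 1).choose p.1 * (q.1 + q.2).choose q.1 : ℕ) : R) *
            (x ^ q.1 * y ^ p.1 * ((1 - x) * (1 - y)) ^ (q.2 + 1)) := by
    rw [Finset.mul_sum]
    refine Finset.sum_congr rfl fun p _ => ?_
    rw [Finset.mul_sum]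
    refine Finset.sum_congr rfl fun q _ => ?_
    ring
  rw [hy]
  ring

private lemma lemB_s9 (x y : R) (m : ℕ) :
    Ga x y (m + 2) = x * Ga x y (m + 1) + ((1 - x) * (1 - y)) * Fa x y (m + 1)
      + ((1 - x) * (1 - y)) * y ^ (m + 2) := by
  unfold Ga Fa
  conv_lhs => rw [Finset.Nat.sum_antidiagonal_succ]
  conv_rhs => enter [1, 2, 2]; rw [Finset.Nat.sum_antidiagonal_succ]
  dsimp only
  have hA0 : ∑ q ∈ antidiagonal (m + 1 + 1),
        (((q.1 + q.2).choose q.1 * (0 + q.2).choose 0 : ℕ) : R) *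
          (x ^ 0 * y ^ q.1 * ((1 - x) * (1 - y)) ^ (q.2 + 1))
      = ((1 - x) * (1 - y)) * (y + (1 - x) * (1 - y)) ^ (m + 1 + 1) := by
    rw [← bin1 ((1 - x) * (1 - y)) y (m + 1 + 1)]
    refine Finset.sum_congr rfl fun q _ => ?_
    simp
  have hB0 : ∑ q ∈ antidiagonal (m + 1),
        (((q.1 + q.2 + 1).choose q.1 * (0 + q.2).choose 0 : ℕ) : R) *
          (x ^ 0 * y ^ q.1 * ((1 - x) * (1 - y)) ^ (q.2 + 1))
      = (y + (1 - x) * (1 - y)) ^ (m + 1 + 1) - y ^ (m + 1 + 1) := by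
    rw [← bin2 ((1 - x) * (1 - y)) y (m + 1)]
    refine Finset.sum_congr rfl fun q _ => ?_
    simp
  have hsplit : (∑ p ∈ antidiagonal (m + 1), ∑ q ∈ antidiagonal p.2,
        (((q.1 + q.2).choose q.1 * (p.1 + 1 + q.2).choose (p.1 + 1) : ℕ) : R) *
          (x ^ (p.1 + 1) * y ^ q.1 * ((1 - x) * (1 - y)) ^ (q.2 + 1)))
      = (x * ∑ p ∈ antidiagonal (m + 1), ∑ q ∈ antidiagonal p.2,
          (((q.1 + q.2).choose q.1 * (p.1 + q.2).choose p.1 : ℕ) : R) *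
            (x ^ p.1 * y ^ q.1 * ((1 - x) * (1 - y)) ^ (q.2 + 1)))
        + ∑ p ∈ antidiagonal (m + 1), ∑ q ∈ antidiagonal p.2,
          (((q.1 + q.2).choose q.1 * (p.1 + q.2).choose (p.1 + 1) : ℕ) : R) *
            (x ^ (p.1 + 1) * y ^ q.1 * ((1 - x) * (1 - y)) ^ (q.2 + 1)) := by
    rw [Finset.mul_sum, ← Finset.sum_add_distrib]
    refine Finset.sum_congr rfl fun p _ => ?_
    rw [Finset.mul_sum, ← Finset.sum_add_distrib]
    refine Finset.sum_congr rfl fun q _ => ?_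
    have e1 : p.1 + 1 + q.2 = p.1 + q.2 + 1 := by omega
    rw [e1, Nat.choose_succ_succ (p.1 + q.2) p.1]
    push_cast
    ring
  have hSh2 : (∑ p ∈ antidiagonal (m + 1), ∑ q ∈ antidiagonal p.2,
        (((q.1 + q.2).choose q.1 * (p.1 + q.2).choose (p.1 + 1) : ℕ) : R) *
          (x ^ (p.1 + 1) * y ^ q.1 * ((1 - x) * (1 - y)) ^ (q.2 + 1)))
      = ((1 - x) * (1 - y)) * ∑ p ∈ antidiagonal m, ∑ q ∈ antidiagonal p.2,
          (((q.1 + q.2 + 1).choose q.1 * (p.1 + 1 + q.2).choose (p.1 + 1) : ℕ) : R) *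
            (x ^ (p.1 + 1) * y ^ q.1 * ((1 - x) * (1 - y)) ^ (q.2 + 1)) := by
    have h1 := reorder_t (R := R) (m + 1) fun r s t =>
      (((s + t).choose s * (r + t).choose (r + 1) : ℕ) : R) *
        (x ^ (r + 1) * y ^ s * ((1 - x) * (1 - y)) ^ (t + 1))
    have h2 := reorder_t (R := R) m fun r s t =>
      (((s + t + 1).choose s * (r + 1 + t).choose (r + 1) : ℕ) : R) *
        (x ^ (r + 1) * y ^ s * ((1 - x) * (1 - y)) ^ (t + 1))
    rw [h1, h2, Finset.Nat.sum_antidiagonal_succ]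
    dsimp only
    have hT0 : ∑ q ∈ antidiagonal (m + 1),
          (((q.2 + 0).choose q.2 * (q.1 + 0).choose (q.1 + 1) : ℕ) : R) *
            (x ^ (q.1 + 1) * y ^ q.2 * ((1 - x) * (1 - y)) ^ (0 + 1)) = 0 := by
      refine Finset.sum_eq_zero fun q _ => ?_
      simp [Nat.choose_succ_self]
    rw [hT0, zero_add, Finset.mul_sum]
    refine Finset.sum_congr rfl fun p _ => ?_
    rw [Finset.mul_sum]
    refine Finset.sum_congr rfl fun q _ => ?_
    have e1 : q.2 + (p.1 + 1) = q.2 + p.1 + 1 := by omega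
    have e2 : q.1 + (p.1 + 1) = q.1 + 1 + p.1 := by omega
    rw [e1, e2]
    push_cast
    ring
  rw [hA0, hB0, hsplit, hSh2]
  ring

private lemma lemB0 (x y : R) :
    Ga x y 1 = x * Ga x y 0 + ((1 - x) * (1 - y)) * Fa x y 0
      + ((1 - x) * (1 - y)) * y ^ 1 := by
  simp [Ga, Fa, Finset.Nat.antidiagonal_succ, Finset.Nat.antidiagonal_zero, Prod.map]
  ring

private lemma lemBall (x y : R) (m : ℕ) :
    Ga x y (m + 1) = x * Ga x y m + ((1 - x) * (1 - y)) * Fa x y m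
      + ((1 - x) * (1 - y)) * y ^ (m + 1) := by
  cases m with
  | zero => exact lemB0 x y
  | succ n => exact lemB_s9 x y n

private lemma closed (x y : R) (m : ℕ) :
    Fa x y m = 1 - y ^ (m + 1) - x * (1 - y) * ∑ k ∈ range (m + 1), (x * y) ^ k ∧
    Ga x y m = ((1 - x) * (1 - y)) * (1 + x * y * ∑ k ∈ range m, (x * y) ^ k) := by
  induction m with
  | zero =>
    constructor
    · simp [Fa, Finset.Nat.antidiagonal_zero]
      ring
    · simp [Ga, Finset.Nat.antidiagonal_zero]
  | succ n ih =>
    obtain ⟨hF, hG⟩ := ih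
    have hGs : Ga x y (n + 1)
        = ((1 - x) * (1 - y)) * (1 + x * y * ∑ k ∈ range (n + 1), (x * y) ^ k) := by
      rw [lemBall, hF, hG, geom_sum_succ]
      ring
    refine ⟨?_, hGs⟩
    rw [lemA_s9, hF, hGs, geom_sum_succ (x := x * y) (n := n + 1), geom_sum_succ (x := x * y) (n := n)]
    ring

private lemma Fa_eq (x y : R) (m : ℕ) :
    Fa x y m = ∑ r ∈ range (m + 1), ∑ s ∈ range (m - r + 1),
      (((m - r + 1).choose s * (m - s).choose r : ℕ) : R) *
        (x ^ r * y ^ s * (1 - x) ^ (m + 1 - r - s) * (1 - y) ^ (m + 1 - r - s)) := by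
  unfold Fa
  rw [Finset.Nat.sum_antidiagonal_eq_sum_range_succ_mk]
  refine Finset.sum_congr rfl fun r hr => ?_
  rw [Finset.mem_range] at hr
  rw [Finset.Nat.sum_antidiagonal_eq_sum_range_succ_mk]
  refine Finset.sum_congr rfl fun s hs => ?_
  rw [Finset.mem_range] at hs
  dsimp only
  have e1 : s + (m - r - s) = m - r := by omega
  have e2 : r + (m - r - s) = m - s := by omega
  have e3 : m - r - s + 1 = m + 1 - r - s := by omega
  rw [e1, e2, e3, mul_pow]
  ring

end Aux

theorem stmt9 (m : ℕ) (R : Type*) [CommRing R] (x y : R) :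
    (1 - x * y) *
        ∑ r ∈ Finset.range (m + 1), ∑ s ∈ Finset.range (m - r + 1),
          (((m - r + 1).choose s * (m - s).choose r : ℕ) : R) *
            (x ^ r * y ^ s * (1 - x) ^ (m + 1 - r - s) * (1 - y) ^ (m + 1 - r - s)) =
      1 - x ^ (m + 2) * y ^ (m + 2) - x * (1 - x ^ (m + 1) * y ^ (m + 1)) -
        (1 - x * y) * y ^ (m + 1) := by
  rw [← Fa_eq x y m, (closed x y m).1]
  have h := geom_sum_mul (x * y) (m + 1)
  linear_combination (x * (1 - y)) * h
end

section
/- For every nonnegative integer m, the polynomial identity (1-x^{m+1})(1-y^{m+1}) = Σ_{r=0}^{m} Σ_{s=0}^{m-r} ( (m+1)/(m+1-r-s) ) · C(m-r, s) C(m-s, r) · x^r y^s (1-x)^{m+1-r-s} (1-y)^{m+1-r-s} holds in ℚ[x,y]; moreover each coefficient ((m+1)/(m+1-r-s)) C(m-r,s) C(m-s,r) is an integer, being equal to C(m-r+1,s)C(m-s,r) + C(m-r,s)C(m-s+1,r) − C(m-r,s)C(m-s,r). -/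
open Finset

def PP (m : ℕ) (x y : ℚ) : ℚ :=
  ∑ r ∈ range (m+1), ∑ s ∈ range (m+1),
    ((m-r).choose s : ℚ) * ((m-s).choose r : ℚ) * (x^r * y^s * ((1-x)*(1-y))^(m+1-r-s))

def QQ (m : ℕ) (x y : ℚ) : ℚ :=
  ∑ r ∈ range (m+1), ∑ s ∈ range (m+1),
    ((m+1-r).choose s : ℚ) * ((m-s).choose r : ℚ) * (x^r * y^s * ((1-x)*(1-y))^(m+1-r-s))

def RR (m : ℕ) (x y : ℚ) : ℚ :=
  ∑ r ∈ range (m+1), ∑ s ∈ range (m+1),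
    ((m-r).choose s : ℚ) * ((m+1-s).choose r : ℚ) * (x^r * y^s * ((1-x)*(1-y))^(m+1-r-s))

lemma relQ (m : ℕ) (x y : ℚ) : QQ (m+1) x y = PP (m+1) x y + y * QQ m x y := by
  have inner : ∀ r ∈ range (m+2),
      (∑ s ∈ range (m+2), ((m+2-r).choose s : ℚ) * ((m+1-s).choose r : ℚ) *
          (x^r * y^s * ((1-x)*(1-y))^(m+2-r-s)))
      = (∑ s ∈ range (m+2), ((m+1-r).choose s : ℚ) * ((m+1-s).choose r : ℚ) *
          (x^r * y^s * ((1-x)*(1-y))^(m+2-r-s)))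
        + ∑ s ∈ range (m+1), y * (((m+1-r).choose s : ℚ) * ((m-s).choose r : ℚ) *
            (x^r * y^s * ((1-x)*(1-y))^(m+1-r-s))) := by
    intro r hr
    simp only [mem_range] at hr
    rw [Finset.sum_range_succ' _ (m+1)]
    conv_rhs => rw [Finset.sum_range_succ' _ (m+1)]
    have key : ∀ s ∈ range (m+1),
        ((m+2-r).choose (s+1) : ℚ) * ((m+1-(s+1)).choose r : ℚ) *
          (x^r * y^(s+1) * ((1-x)*(1-y))^(m+2-r-(s+1)))
        = ((m+1-r).choose (s+1) : ℚ) * ((m+1-(s+1)).choose r : ℚ) *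
            (x^r * y^(s+1) * ((1-x)*(1-y))^(m+2-r-(s+1)))
          + y * (((m+1-r).choose s : ℚ) * ((m-s).choose r : ℚ) *
            (x^r * y^s * ((1-x)*(1-y))^(m+1-r-s))) := by
      intro s hs
      simp only [mem_range] at hs
      have e1 : m + 2 - r = (m+1-r) + 1 := by omega
      have e2 : m + 1 - (s+1) = m - s := by omega
      have e3 : m + 2 - r - (s+1) = m + 1 - r - s := by omega
      rw [e3, e2, e1, Nat.choose_succ_succ']
      push_cast
      ring
    rw [sum_congr rfl key, sum_add_distrib]
    simp only [Nat.choose_zero_right]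
    ring
  rw [QQ, PP, QQ, sum_congr rfl inner, sum_add_distrib]
  have top : ∑ s ∈ range (m+1), y * (((m+1-(m+1)).choose s : ℚ) * ((m-s).choose (m+1) : ℚ) *
      (x^(m+1) * y^s * ((1-x)*(1-y))^(m+1-(m+1)-s))) = 0 := by
    apply Finset.sum_eq_zero
    intro s hs
    rw [Nat.choose_eq_zero_of_lt (by omega : m - s < m+1)]
    push_cast; ring
  have hB : ∑ r ∈ range (m+2), ∑ s ∈ range (m+1), y * (((m+1-r).choose s : ℚ) *
        ((m-s).choose r : ℚ) * (x^r * y^s * ((1-x)*(1-y))^(m+1-r-s)))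
      = y * ∑ r ∈ range (m+1), ∑ s ∈ range (m+1), ((m+1-r).choose s : ℚ) *
        ((m-s).choose r : ℚ) * (x^r * y^s * ((1-x)*(1-y))^(m+1-r-s)) := by
    rw [Finset.sum_range_succ, top, add_zero, mul_sum]
    exact sum_congr rfl fun r hr => by rw [mul_sum]
  rw [hB]

lemma PP_symm (m : ℕ) (x y : ℚ) : PP m x y = PP m y x := by
  rw [PP, PP, Finset.sum_comm]
  exact sum_congr rfl fun s _ => sum_congr rfl fun r _ => by
    rw [show m+1-s-r = m+1-r-s from by omega]; ring

lemma RR_eq (m : ℕ) (x y : ℚ) : RR m x y = QQ m y x := by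
  rw [RR, QQ, Finset.sum_comm]
  exact sum_congr rfl fun s _ => sum_congr rfl fun r _ => by
    rw [show m+1-s-r = m+1-r-s from by omega]; ring

lemma relR (m : ℕ) (x y : ℚ) : RR (m+1) x y = PP (m+1) x y + x * RR m x y := by
  rw [RR_eq, relQ, ← RR_eq, ← PP_symm]

lemma relP (m : ℕ) (x y : ℚ) :
    PP (m+1) x y = (1-x)*(1-y) * RR m x y + y * PP m x y + x^(m+1) * ((1-x)*(1-y)) := by
  have shell : ∑ s ∈ range (m+2), ((m+1-(m+1)).choose s : ℚ) * ((m+1-s).choose (m+1) : ℚ) *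
      (x^(m+1) * y^s * ((1-x)*(1-y))^(m+2-(m+1)-s)) = x^(m+1) * ((1-x)*(1-y)) := by
    rw [Finset.sum_range_succ' _ (m+1)]
    have z : ∀ s ∈ range (m+1), ((m+1-(m+1)).choose (s+1) : ℚ) *
        ((m+1-(s+1)).choose (m+1) : ℚ) *
        (x^(m+1) * y^(s+1) * ((1-x)*(1-y))^(m+2-(m+1)-(s+1))) = 0 := by
      intro s hs
      rw [show m+1-(m+1) = 0 from by omega, Nat.choose_eq_zero_of_lt (Nat.succ_pos s)]
      push_cast; ring
    rw [sum_congr rfl z, Finset.sum_const_zero, zero_add,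
      show m+1-(m+1) = 0 from by omega, show m+2-(m+1)-0 = 1 from by omega]
    simp [Nat.choose_self]
  have inner : ∀ r ∈ range (m+1),
      (∑ s ∈ range (m+2), ((m+1-r).choose s : ℚ) * ((m+1-s).choose r : ℚ) *
        (x^r * y^s * ((1-x)*(1-y))^(m+2-r-s)))
      = (1-x)*(1-y) * (∑ s ∈ range (m+1), ((m-r).choose s : ℚ) * ((m+1-s).choose r : ℚ) *
          (x^r * y^s * ((1-x)*(1-y))^(m+1-r-s)))
        + y * (∑ s ∈ range (m+1), ((m-r).choose s : ℚ) * ((m-s).choose r : ℚ) *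
          (x^r * y^s * ((1-x)*(1-y))^(m+1-r-s))) := by
    intro r hr
    simp only [mem_range] at hr
    rw [Finset.sum_range_succ' _ (m+1)]
    have key : ∀ s ∈ range (m+1),
        ((m+1-r).choose (s+1) : ℚ) * ((m+1-(s+1)).choose r : ℚ) *
          (x^r * y^(s+1) * ((1-x)*(1-y))^(m+2-r-(s+1)))
        = ((m-r).choose (s+1) : ℚ) * ((m-s).choose r : ℚ) *
            (x^r * y^(s+1) * ((1-x)*(1-y))^(m+1-r-s))
          + y * (((m-r).choose s : ℚ) * ((m-s).choose r : ℚ) *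
            (x^r * y^s * ((1-x)*(1-y))^(m+1-r-s))) := by
      intro s hs
      simp only [mem_range] at hs
      have e1 : m + 1 - r = (m-r) + 1 := by omega
      have e2 : m + 1 - (s+1) = m - s := by omega
      have e3 : m + 2 - r - (s+1) = m + 1 - r - s := by omega
      rw [e3, e2, e1, Nat.choose_succ_succ']
      push_cast
      ring
    rw [sum_congr rfl key, sum_add_distrib, mul_sum, mul_sum]
    conv_rhs => rw [Finset.sum_range_succ' _ m]
    rw [Finset.sum_range_succ]
    have btop : ((m-r).choose (m+1) : ℚ) * ((m-m).choose r : ℚ) *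
        (x^r * y^(m+1) * ((1-x)*(1-y))^(m+1-r-m)) = 0 := by
      rw [Nat.choose_eq_zero_of_lt (show m - r < m+1 from by omega)]
      push_cast; ring
    rw [btop, add_zero]
    have bmatch : ∀ s ∈ range m,
        ((m-r).choose (s+1) : ℚ) * ((m-s).choose r : ℚ) *
          (x^r * y^(s+1) * ((1-x)*(1-y))^(m+1-r-s))
        = (1-x)*(1-y) * (((m-r).choose (s+1) : ℚ) * ((m+1-(s+1)).choose r : ℚ) *
            (x^r * y^(s+1) * ((1-x)*(1-y))^(m+1-r-(s+1)))) := by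
      intro s hs
      simp only [mem_range] at hs
      rw [show m+1-(s+1) = m - s from by omega]
      by_cases hrs : r + s ≤ m
      · rw [show m+1-r-s = (m+1-r-(s+1))+1 from by omega, pow_succ]
        ring
      · rw [Nat.choose_eq_zero_of_lt (show m - r < s+1 from by omega)]
        push_cast; ring
    rw [sum_congr rfl bmatch]
    have f0match : ((m+1-r).choose 0 : ℚ) * ((m+1-0).choose r : ℚ) *
          (x^r * y^0 * ((1-x)*(1-y))^(m+2-r-0))
        = (1-x)*(1-y) * (((m-r).choose 0 : ℚ) * ((m+1-0).choose r : ℚ) *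
            (x^r * y^0 * ((1-x)*(1-y))^(m+1-r-0))) := by
      rw [show m+2-r-0 = (m+1-r-0)+1 from by omega, pow_succ]
      simp only [Nat.choose_zero_right]
      ring
    rw [f0match]
    ring
  rw [PP, Finset.sum_range_succ, shell, sum_congr rfl inner, sum_add_distrib,
    ← mul_sum, ← mul_sum, RR, PP]

def gs (m : ℕ) (x y : ℚ) : ℚ := ∑ k ∈ range (m+1), (x*y)^k

lemma gs_succ (m : ℕ) (x y : ℚ) : gs (m+1) x y = 1 + x*y* gs m x y := by
  rw [gs, gs, Finset.sum_range_succ' _ (m+1)]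
  simp only [pow_succ, pow_zero]
  rw [← sum_mul]; ring

lemma closed_s10 (m : ℕ) (x y : ℚ) :
    PP m x y = (1-x)*(1-y) * gs m x y ∧
    QQ m x y = 1 - y^(m+1) - x*(1-y) * gs m x y ∧
    RR m x y = 1 - x^(m+1) - y*(1-x) * gs m x y := by
  induction m with
  | zero =>
    refine ⟨?_, ?_, ?_⟩ <;> · simp [PP, QQ, RR, gs]; try ring
  | succ n ih =>
    obtain ⟨hP, hQ, hR⟩ := ih
    refine ⟨?_, ?_, ?_⟩
    · rw [relP, hR, hP, gs_succ]; ring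
    · rw [relQ, relP, hR, hP, hQ, gs_succ]; ring
    · rw [relR, relP, hR, hP, gs_succ]; ring

lemma coeff_split (m r s : ℕ) (h : r + s ≤ m) :
    (((m : ℚ) + 1) / ((m : ℚ) + 1 - r - s)) * ((m - r).choose s : ℚ) *
        ((m - s).choose r : ℚ) =
      ((m - r + 1).choose s : ℚ) * ((m - s).choose r : ℚ) +
        ((m - r).choose s : ℚ) * ((m - s + 1).choose r : ℚ) -
        ((m - r).choose s : ℚ) * ((m - s).choose r : ℚ) := by
  have h1 := Nat.choose_mul_succ_eq (m - r) s
  have h2 := Nat.choose_mul_succ_eq (m - s) r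
  have e1 : m - r + 1 - s = m + 1 - r - s := by omega
  have e2 : m - s + 1 - r = m + 1 - r - s := by omega
  rw [e1] at h1; rw [e2] at h2
  have h1' : ((m-r).choose s : ℚ) * ((m-r : ℕ) + 1) = ((m-r+1).choose s : ℚ) * ((m+1-r-s : ℕ)) := by
    exact_mod_cast congrArg (Nat.cast : ℕ → ℚ) h1
  have h2' : ((m-s).choose r : ℚ) * ((m-s : ℕ) + 1) = ((m-s+1).choose r : ℚ) * ((m+1-r-s : ℕ)) := by
    exact_mod_cast congrArg (Nat.cast : ℕ → ℚ) h2
  have c1 : ((m - r : ℕ) : ℚ) = (m : ℚ) - r := by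
    rw [Nat.cast_sub (by omega)]
  have c2 : ((m - s : ℕ) : ℚ) = (m : ℚ) - s := by
    rw [Nat.cast_sub (by omega)]
  have c3 : ((m + 1 - r - s : ℕ) : ℚ) = (m : ℚ) + 1 - r - s := by
    rw [Nat.cast_sub (by omega), Nat.cast_sub (by omega)]; push_cast; ring
  rw [c1, c3] at h1'
  rw [c2, c3] at h2'
  have hne : (m : ℚ) + 1 - r - s ≠ 0 := by
    rw [← c3]
    exact Nat.cast_ne_zero.mpr (by omega)
  field_simp
  linear_combination ((m - s).choose r : ℚ) * h1' + ((m - r).choose s : ℚ) * h2'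

theorem stmt10 (m : ℕ) :
    (∀ x y : ℚ,
        (1 - x ^ (m + 1)) * (1 - y ^ (m + 1)) =
          ∑ r ∈ Finset.range (m + 1), ∑ s ∈ Finset.range (m - r + 1),
            (((m : ℚ) + 1) / ((m : ℚ) + 1 - r - s)) * ((m - r).choose s : ℚ) *
              ((m - s).choose r : ℚ) *
              (x ^ r * y ^ s * (1 - x) ^ (m + 1 - r - s) * (1 - y) ^ (m + 1 - r - s))) ∧
    ∀ r s : ℕ, r + s ≤ m →
      (((m : ℚ) + 1) / ((m : ℚ) + 1 - r - s)) * ((m - r).choose s : ℚ) *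
          ((m - s).choose r : ℚ) =
        ((m - r + 1).choose s : ℚ) * ((m - s).choose r : ℚ) +
          ((m - r).choose s : ℚ) * ((m - s + 1).choose r : ℚ) -
          ((m - r).choose s : ℚ) * ((m - s).choose r : ℚ) := by
  constructor
  · intro x y
    have step1 : (∑ r ∈ Finset.range (m + 1), ∑ s ∈ Finset.range (m - r + 1),
            (((m : ℚ) + 1) / ((m : ℚ) + 1 - r - s)) * ((m - r).choose s : ℚ) *
              ((m - s).choose r : ℚ) *
              (x ^ r * y ^ s * (1 - x) ^ (m + 1 - r - s) * (1 - y) ^ (m + 1 - r - s)))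
        = ∑ r ∈ range (m + 1), ∑ s ∈ range (m - r + 1),
            (((m+1-r).choose s : ℚ) * ((m-s).choose r : ℚ) * (x^r * y^s * ((1-x)*(1-y))^(m+1-r-s))
             + ((m-r).choose s : ℚ) * ((m+1-s).choose r : ℚ) * (x^r * y^s * ((1-x)*(1-y))^(m+1-r-s))
             - ((m-r).choose s : ℚ) * ((m-s).choose r : ℚ) * (x^r * y^s * ((1-x)*(1-y))^(m+1-r-s))) := by
      refine sum_congr rfl fun r hr => sum_congr rfl fun s hs => ?_
      simp only [mem_range] at hr hs
      have h : r + s ≤ m := by omega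
      rw [coeff_split m r s h, show m-r+1 = m+1-r from by omega,
        show m-s+1 = m+1-s from by omega, mul_pow]
      ring
    rw [step1]
    have step2 : ∀ r ∈ range (m+1),
        (∑ s ∈ range (m - r + 1),
            (((m+1-r).choose s : ℚ) * ((m-s).choose r : ℚ) * (x^r * y^s * ((1-x)*(1-y))^(m+1-r-s))
             + ((m-r).choose s : ℚ) * ((m+1-s).choose r : ℚ) * (x^r * y^s * ((1-x)*(1-y))^(m+1-r-s))
             - ((m-r).choose s : ℚ) * ((m-s).choose r : ℚ) * (x^r * y^s * ((1-x)*(1-y))^(m+1-r-s))))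
        = (∑ s ∈ range (m+1), ((m+1-r).choose s : ℚ) * ((m-s).choose r : ℚ) * (x^r * y^s * ((1-x)*(1-y))^(m+1-r-s)))
          + (∑ s ∈ range (m+1), ((m-r).choose s : ℚ) * ((m+1-s).choose r : ℚ) * (x^r * y^s * ((1-x)*(1-y))^(m+1-r-s)))
          - (∑ s ∈ range (m+1), ((m-r).choose s : ℚ) * ((m-s).choose r : ℚ) * (x^r * y^s * ((1-x)*(1-y))^(m+1-r-s))) := by
      intro r hr
      simp only [mem_range] at hr
      have hsub : range (m - r + 1) ⊆ range (m + 1) := by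
        apply Finset.range_subset_range.mpr; omega
      rw [sum_sub_distrib, sum_add_distrib]
      have z1 : ∀ s ∈ range (m+1), s ∉ range (m - r + 1) →
          ((m+1-r).choose s : ℚ) * ((m-s).choose r : ℚ) * (x^r * y^s * ((1-x)*(1-y))^(m+1-r-s)) = 0 := by
        intro s hs hns
        simp only [mem_range] at hs hns
        rw [Nat.choose_eq_zero_of_lt (show m - s < r from by omega)]; push_cast; ring
      have z2 : ∀ s ∈ range (m+1), s ∉ range (m - r + 1) →
          ((m-r).choose s : ℚ) * ((m+1-s).choose r : ℚ) * (x^r * y^s * ((1-x)*(1-y))^(m+1-r-s)) = 0 := by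
        intro s hs hns
        simp only [mem_range] at hs hns
        rw [Nat.choose_eq_zero_of_lt (show m - r < s from by omega)]; push_cast; ring
      have z3 : ∀ s ∈ range (m+1), s ∉ range (m - r + 1) →
          ((m-r).choose s : ℚ) * ((m-s).choose r : ℚ) * (x^r * y^s * ((1-x)*(1-y))^(m+1-r-s)) = 0 := by
        intro s hs hns
        simp only [mem_range] at hs hns
        rw [Nat.choose_eq_zero_of_lt (show m - r < s from by omega)]; push_cast; ring
      rw [Finset.sum_subset hsub z1, Finset.sum_subset hsub z2, Finset.sum_subset hsub z3]
    rw [sum_congr rfl step2, sum_sub_distrib, sum_add_distrib, ← QQ, ← RR, ← PP]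
    obtain ⟨hP, hQ, hR⟩ := closed_s10 m x y
    rw [hP, hQ, hR]
    have hg := geom_sum_mul (x*y) (m+1)
    rw [show (∑ i ∈ range (m+1), (x*y)^i) = gs m x y from rfl] at hg
    linear_combination -hg
  · exact fun r s h => coeff_split m r s h
end

section
/- Let F be a field, let n be a positive integer, and let x_1, …, x_n ∈ F be pairwise distinct. Then the Vandermonde matrix A = (x_i^{n-j})_{1≤i,j≤n} is invertible, and its inverse is given entrywise by (A^{-1})_{i,j} = (-1)^{n-i} · e_{i-1}(x_1, …, x̂_j, …, x_n) / Π_{k=1, k≠j}^{n} (x_k - x_j), where (x_1, …, x̂_j, …, x_n) denotes the list x_1, …, x_n with x_j omitted. -/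
lemma keylem {F : Type*} [CommRing F] {σ : Type*} [DecidableEq σ] (s : Finset σ)
    (f : σ → F) (y : F) :
    ∏ m ∈ s, (y - f m) =
      ∑ i ∈ Finset.range (s.card + 1),
        (-1 : F) ^ i * ((∑ t ∈ Finset.powersetCard i s, ∏ a ∈ t, f a) * y ^ (s.card - i)) := by
  have h := congrArg (Polynomial.eval y)
    (Multiset.prod_X_sub_X_eq_sum_esymm ((s.val.map f) : Multiset F))
  simp only [Multiset.map_map, Polynomial.eval_multiset_prod, Polynomial.eval_finset_sum,
    Polynomial.eval_mul, Polynomial.eval_pow, Polynomial.eval_neg, Polynomial.eval_one,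
    Polynomial.eval_C, Polynomial.eval_X, Multiset.card_map, Function.comp,
    Finset.esymm_map_val] at h
  rw [Finset.prod_eq_multiset_prod]
  convert h using 2
  · rfl
  all_goals simp

theorem stmt11 (F : Type*) [Field F] (n : ℕ) (hn : 0 < n) (x : Fin n → F)
    (hx : Function.Injective x) :
    IsUnit (Matrix.of fun i j : Fin n => x i ^ (n - 1 - (j : ℕ))).det ∧
      ∀ i j : Fin n,
        (Matrix.of fun i j : Fin n => x i ^ (n - 1 - (j : ℕ)))⁻¹ i j =
          (-1 : F) ^ (n - 1 - (i : ℕ)) *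
            (∑ t ∈ Finset.powersetCard (i : ℕ) (Finset.univ.erase j), ∏ a ∈ t, x a) /
            ∏ k ∈ Finset.univ.erase j, (x k - x j) := by
  classical
  set A : Matrix (Fin n) (Fin n) F := Matrix.of fun i j : Fin n => x i ^ (n - 1 - (j : ℕ))
    with hA
  set B : Matrix (Fin n) (Fin n) F := Matrix.of fun i j : Fin n =>
      (-1 : F) ^ (i : ℕ) *
        (∑ t ∈ Finset.powersetCard (i : ℕ) (Finset.univ.erase j), ∏ a ∈ t, x a) /
        ∏ k ∈ Finset.univ.erase j, (x j - x k) with hB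
  have hcard : ∀ j : Fin n, (Finset.univ.erase j).card = n - 1 := by
    intro j
    rw [Finset.card_erase_of_mem (Finset.mem_univ j), Finset.card_univ, Fintype.card_fin]
  have hD : ∀ j : Fin n, (∏ k ∈ Finset.univ.erase j, (x j - x k)) ≠ 0 := by
    intro j
    refine Finset.prod_ne_zero_iff.mpr fun k hk => sub_ne_zero.mpr fun h => ?_
    exact (Finset.mem_erase.mp hk).1 (hx h).symm
  have hAB : A * B = 1 := by
    ext i k
    rw [Matrix.mul_apply, Matrix.one_apply]
    have hterm : ∀ j : Fin n, A i j * B j k =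
        ((-1 : F) ^ (j : ℕ) *
          ((∑ t ∈ Finset.powersetCard (j : ℕ) (Finset.univ.erase k), ∏ a ∈ t, x a) *
            x i ^ (n - 1 - (j : ℕ)))) /
          ∏ m ∈ Finset.univ.erase k, (x k - x m) := by
      intro j
      simp only [hA, hB, Matrix.of_apply]
      ring
    rw [Finset.sum_congr rfl fun j _ => hterm j, ← Finset.sum_div]
    have hsum : (∑ j : Fin n, ((-1 : F) ^ (j : ℕ) *
        ((∑ t ∈ Finset.powersetCard (j : ℕ) (Finset.univ.erase k), ∏ a ∈ t, x a) *
          x i ^ (n - 1 - (j : ℕ))))) = ∏ m ∈ Finset.univ.erase k, (x i - x m) := by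
      rw [Fin.sum_univ_eq_sum_range (fun j => (-1 : F) ^ j *
        ((∑ t ∈ Finset.powersetCard j (Finset.univ.erase k), ∏ a ∈ t, x a) *
          x i ^ (n - 1 - j))) n]
      rw [keylem (Finset.univ.erase k) x (x i), hcard k, Nat.sub_add_cancel hn]
    rw [hsum]
    by_cases hik : i = k
    · subst hik
      rw [if_pos rfl, div_self (hD i)]
    · rw [if_neg hik]
      rw [Finset.prod_eq_zero (Finset.mem_erase.mpr ⟨hik, Finset.mem_univ i⟩) (sub_self (x i)),
        zero_div]
  refine ⟨Matrix.isUnit_det_of_right_inverse hAB, ?_⟩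
  have hinv : A⁻¹ = B := Matrix.inv_eq_right_inv hAB
  intro i j
  rw [hinv, hB]
  simp only [Matrix.of_apply]
  have hi : (i : ℕ) ≤ n - 1 := by omega
  have h1 : (∏ k ∈ Finset.univ.erase j, (x k - x j)) =
      (-1 : F) ^ (n - 1) * ∏ k ∈ Finset.univ.erase j, (x j - x k) := by
    rw [Finset.prod_congr rfl fun k _ => show x k - x j = -1 * (x j - x k) by ring,
      Finset.prod_mul_distrib, Finset.prod_const, hcard j]
  have hsign : (-1 : F) ^ (n - 1 - (i : ℕ)) = (-1) ^ (n - 1) * (-1) ^ (i : ℕ) := by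
    have h2 : (-1 : F) ^ (n - 1) = (-1) ^ (n - 1 - (i : ℕ)) * (-1) ^ (i : ℕ) := by
      rw [← pow_add]; congr 1; omega
    rw [h2, mul_assoc, ← pow_add, Even.neg_one_pow ⟨(i : ℕ), rfl⟩, mul_one]
  have hm1 : ((-1 : F) ^ (n - 1)) ≠ 0 := pow_ne_zero _ (by norm_num)
  rw [h1, hsign, mul_assoc, mul_div_mul_left _ _ hm1]
end

section
/- For every positive integer n, the determinant of the n×n matrix A with entries A_{i,j} = (1-x^i)^{n+1-j} (1-x^{i+1})^{n+1-j} x^{i(j-1)} (1 ≤ i,j ≤ n) satisfies det A = (-1)^{n(n-1)/2} · x^{n(n^2-1)/6} · Π_{k=1}^{n} (1-x^{2k-1})^{n+1-k} (1-x^{2k})^{n+1-k}, as an identity in the polynomial ring ℤ[x]. -/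
open Finset

/-- Swap a `Fin` double product over `i < k` into range form. -/
lemma finDoubleProd {M : Type*} [CommMonoid M] (n : ℕ) (g : ℕ → ℕ → M) :
    (∏ i : Fin n, ∏ k ∈ Finset.Ioi i, g (i : ℕ) (k : ℕ)) =
      ∏ k ∈ Finset.range n, ∏ i ∈ Finset.range k, g i k := by
  rw [Finset.prod_comm' (t' := (Finset.univ : Finset (Fin n)))
    (s' := fun k => Finset.Iio k) (by simp)]
  rw [← Fin.prod_univ_eq_prod_range (fun k => ∏ i ∈ Finset.range k, g i k) n]
  refine Finset.prod_congr rfl fun k _ => ?_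
  rw [← Nat.Iio_eq_range, ← Fin.map_valEmbedding_Iio, Finset.prod_map]
  rfl

lemma pairfac {R : Type*} [CommRing R] (x : R) (i d : ℕ) :
    (1 - x ^ (i + 1)) * (1 - x ^ (i + 2)) * x ^ (i + d + 2) -
      (1 - x ^ (i + d + 2)) * (1 - x ^ (i + d + 3)) * x ^ (i + 1) =
    -x ^ (i + 1) * ((1 - x ^ (d + 1)) * (1 - x ^ (2 * i + d + 4))) := by
  ring

lemma twoSum (n : ℕ) : 2 * ∑ i ∈ Finset.range n, (i + 1) = n * (n + 1) := by
  induction n with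
  | zero => simp
  | succ m ih => rw [Finset.sum_range_succ, Nat.mul_add, ih]; ring

lemma sixSum (n : ℕ) :
    6 * (∑ k ∈ Finset.range n, ∑ i ∈ Finset.range k, (i + 1)) + n = n ^ 3 := by
  induction n with
  | zero => simp
  | succ m ih =>
    rw [Finset.sum_range_succ, Nat.mul_add]
    have h2 : 6 * ∑ i ∈ Finset.range m, (i + 1) = 3 * (m * (m + 1)) := by
      rw [← twoSum]; ring
    have : 6 * ∑ k ∈ Finset.range m, ∑ i ∈ Finset.range k, (i + 1) = m ^ 3 - m := by omega
    nlinarith [this, Nat.sub_le (m^3) m, ih]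

lemma sumExp (n : ℕ) :
    (∑ k ∈ Finset.range n, ∑ i ∈ Finset.range k, (i + 1)) = n * (n ^ 2 - 1) / 6 := by
  rcases n with _ | m
  · simp
  · have h := sixSum (m + 1)
    have hsq : (m + 1) ^ 2 - 1 = m * m + 2 * m := by
      have : (m + 1) ^ 2 = m * m + 2 * m + 1 := by ring
      rw [this]; exact Nat.add_sub_cancel _ _
    rw [hsq]
    have h3 : (m + 1) * (m * m + 2 * m) =
        6 * (∑ k ∈ Finset.range (m + 1), ∑ i ∈ Finset.range k, (i + 1)) := by
      have : (m + 1) ^ 3 = (m + 1) * (m * m + 2 * m) + (m + 1) := by ring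
      omega
    rw [h3, Nat.mul_div_cancel_left _ (by norm_num)]
open Finset

lemma prodsq {M : Type*} [CommMonoid M] (n : ℕ) (v : Fin n → M) :
    (∏ i : Fin n, ∏ k ∈ Finset.Ioi i, (v i * v k)) = ∏ i : Fin n, v i ^ (n - 1) := by
  rw [Finset.prod_congr rfl (fun i _ => Finset.prod_mul_distrib)]
  rw [Finset.prod_mul_distrib]
  have h1 : (∏ i : Fin n, ∏ _k ∈ Finset.Ioi i, v i) = ∏ i : Fin n, v i ^ (n - 1 - (i : ℕ)) := by
    refine Finset.prod_congr rfl fun i _ => ?_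
    rw [Finset.prod_const, Fin.card_Ioi]
  have h2 : (∏ i : Fin n, ∏ k ∈ Finset.Ioi i, v k) = ∏ k : Fin n, v k ^ (k : ℕ) := by
    rw [Finset.prod_comm' (t' := (Finset.univ : Finset (Fin n)))
      (s' := fun k => Finset.Iio k) (by simp)]
    refine Finset.prod_congr rfl fun k _ => ?_
    rw [Finset.prod_const, Fin.card_Iio]
  rw [h1, h2, ← Finset.prod_mul_distrib]
  refine Finset.prod_congr rfl fun i _ => ?_
  rw [← pow_add]
  congr 1
  have := i.is_lt
  omega

/-- Projective (two-parameter) Vandermonde determinant over a field. -/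
lemma det_pvdm {K : Type*} [Field K] (n : ℕ) (a b : Fin n → K) (ha : ∀ i, a i ≠ 0) :
    (Matrix.of fun i j : Fin n => a i ^ (n - 1 - (j : ℕ)) * b i ^ (j : ℕ)).det =
      ∏ i : Fin n, ∏ k ∈ Finset.Ioi i, (a i * b k - a k * b i) := by
  have entry : ∀ i j : Fin n, a i ^ (n - 1 - (j : ℕ)) * b i ^ (j : ℕ) =
      a i ^ (n - 1) * (b i / a i) ^ (j : ℕ) := by
    intro i j
    rw [div_pow, pow_sub₀ _ (ha i) (by have := j.is_lt; omega)]
    field_simp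
  have : (Matrix.of fun i j : Fin n => a i ^ (n - 1 - (j : ℕ)) * b i ^ (j : ℕ)) =
      Matrix.of fun i j : Fin n => a i ^ (n - 1) *
        (Matrix.vandermonde fun i => b i / a i) i j := by
    ext i j; exact entry i j
  rw [this, Matrix.det_mul_column, Matrix.det_vandermonde, ← prodsq n a, ← Finset.prod_mul_distrib]
  rw [← Finset.prod_congr rfl fun i (_ : i ∈ Finset.univ) => Finset.prod_mul_distrib]
  refine Finset.prod_congr rfl fun i _ => Finset.prod_congr rfl fun k _ => ?_
  rw [div_sub_div _ _ (ha k) (ha i), mul_comm (a i) (a k), mul_div_cancel₀ _ (mul_ne_zero (ha k) (ha i))]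
  ring

lemma prodTwoMul {M : Type*} [CommMonoid M] (N : ℕ) (f : ℕ → M) :
    ∏ m ∈ Finset.range (2 * N), f m = ∏ k ∈ Finset.range N, (f (2 * k) * f (2 * k + 1)) := by
  induction N with
  | zero => simp
  | succ m ih =>
    rw [show 2 * (m + 1) = 2 * m + 1 + 1 by omega, Finset.prod_range_succ,
      Finset.prod_range_succ, Finset.prod_range_succ, ih, mul_assoc]

lemma newfac {R : Type*} [CommRing R] (x : R) (n : ℕ) :
    ((1 - x ^ (n + 1)) * (1 - x ^ (n + 2))) *
      ∏ i ∈ Finset.range n, ((1 - x ^ (n - i)) * (1 - x ^ (i + n + 3))) =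
    ∏ k ∈ Finset.range (n + 1), ((1 - x ^ (2 * k + 1)) * (1 - x ^ (2 * k + 2))) := by
  have hrhs : ∏ k ∈ Finset.range (n + 1), ((1 - x ^ (2 * k + 1)) * (1 - x ^ (2 * k + 2))) =
      ∏ m ∈ Finset.range (2 * (n + 1)), (1 - x ^ (m + 1)) := by
    rw [prodTwoMul]
  rw [hrhs, Finset.prod_mul_distrib]
  have h1 : ∏ i ∈ Finset.range n, (1 - x ^ (n - i)) =
      ∏ i ∈ Finset.range n, (1 - x ^ (i + 1)) := by
    rw [← Finset.prod_range_reflect (fun i => 1 - x ^ (i + 1)) n]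
    refine Finset.prod_congr rfl fun i hi => ?_
    simp only [Finset.mem_range] at hi
    congr 2
    omega
  have h2 : ∏ i ∈ Finset.range n, (1 - x ^ (i + n + 3)) =
      ∏ m ∈ Finset.Ico (n + 2) (2 * n + 2), (1 - x ^ (m + 1)) := by
    rw [Finset.prod_Ico_eq_prod_range]
    refine Finset.prod_congr (by congr 1; omega) fun i hi => ?_
    congr 2
    omega
  rw [h1, h2]
  have h3 : ((1 - x ^ (n + 1)) * (1 - x ^ (n + 2))) *
      ((∏ i ∈ Finset.range n, (1 - x ^ (i + 1))) *
        ∏ m ∈ Finset.Ico (n + 2) (2 * n + 2), (1 - x ^ (m + 1))) =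
      ((∏ i ∈ Finset.range n, (1 - x ^ (i + 1))) * (1 - x ^ (n + 1)) * (1 - x ^ (n + 2))) *
        ∏ m ∈ Finset.Ico (n + 2) (2 * n + 2), (1 - x ^ (m + 1)) := by ring
  rw [h3, ← Finset.prod_range_succ (fun m => 1 - x ^ (m + 1)) n,
    ← Finset.prod_range_succ (fun m => 1 - x ^ (m + 1)) (n + 1),
    show n + 1 + 1 = n + 2 by omega,
    Finset.range_eq_Ico,
    Finset.prod_Ico_consecutive (fun m => 1 - x ^ (m + 1)) (by omega : 0 ≤ n + 2)
      (by omega : n + 2 ≤ 2 * n + 2), show 2 * (n + 1) = 2 * n + 2 by omega, ← Finset.range_eq_Ico]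

lemma bookkeeping {R : Type*} [CommRing R] (x : R) (n : ℕ) :
    (∏ i ∈ Finset.range n, ((1 - x ^ (i + 1)) * (1 - x ^ (i + 2)))) *
      ∏ k ∈ Finset.range n, ∏ i ∈ Finset.range k, ((1 - x ^ (k - i)) * (1 - x ^ (i + k + 3))) =
    ∏ k ∈ Finset.range n, ((1 - x ^ (2 * k + 1)) ^ (n - k) * (1 - x ^ (2 * k + 2)) ^ (n - k)) := by
  induction n with
  | zero => simp
  | succ m ih =>
    have hrhs : (∏ k ∈ Finset.range m,
          ((1 - x ^ (2 * k + 1)) ^ (m - k) * (1 - x ^ (2 * k + 2)) ^ (m - k))) *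
        (∏ k ∈ Finset.range (m + 1), ((1 - x ^ (2 * k + 1)) * (1 - x ^ (2 * k + 2)))) =
        ∏ k ∈ Finset.range (m + 1),
          ((1 - x ^ (2 * k + 1)) ^ (m + 1 - k) * (1 - x ^ (2 * k + 2)) ^ (m + 1 - k)) := by
      conv_rhs => rw [Finset.prod_range_succ]
      rw [Finset.prod_range_succ (fun k => (1 - x ^ (2 * k + 1)) * (1 - x ^ (2 * k + 2))),
        ← mul_assoc, ← Finset.prod_mul_distrib]
      congr 1
      · refine Finset.prod_congr rfl fun k hk => ?_
        simp only [Finset.mem_range] at hk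
        rw [show m + 1 - k = (m - k) + 1 by omega, pow_succ, pow_succ]
        ring
      · rw [show m + 1 - m = 1 by omega, pow_one, pow_one]
    rw [← hrhs, ← ih, Finset.prod_range_succ, Finset.prod_range_succ
      (fun k => ∏ i ∈ Finset.range k, ((1 - x ^ (k - i)) * (1 - x ^ (i + k + 3)))),
      ← newfac x m]
    ring
lemma main_field {K : Type*} [Field K] (n : ℕ) (hn : 0 < n) (t : K)
    (ht : ∀ m : ℕ, 1 ≤ m → 1 - t ^ m ≠ 0) :
    (Matrix.of fun i j : Fin n =>
        (1 - t ^ ((i : ℕ) + 1)) ^ (n - (j : ℕ)) * (1 - t ^ ((i : ℕ) + 2)) ^ (n - (j : ℕ)) *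
          t ^ (((i : ℕ) + 1) * (j : ℕ))).det =
      (-1 : K) ^ (n * (n - 1) / 2) * t ^ (n * (n ^ 2 - 1) / 6) *
        ∏ k ∈ Finset.range n,
          ((1 - t ^ (2 * k + 1)) ^ (n - k) * (1 - t ^ (2 * k + 2)) ^ (n - k)) := by
  set a : Fin n → K := fun i => (1 - t ^ ((i : ℕ) + 1)) * (1 - t ^ ((i : ℕ) + 2)) with ha_def
  set b : Fin n → K := fun i => t ^ ((i : ℕ) + 1) with hb_def
  have ha : ∀ i, a i ≠ 0 := fun i =>
    mul_ne_zero (ht _ (by omega)) (ht _ (by omega))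
  have hM : (Matrix.of fun i j : Fin n =>
        (1 - t ^ ((i : ℕ) + 1)) ^ (n - (j : ℕ)) * (1 - t ^ ((i : ℕ) + 2)) ^ (n - (j : ℕ)) *
          t ^ (((i : ℕ) + 1) * (j : ℕ))) =
      Matrix.of fun i j : Fin n =>
        a i * ((Matrix.of fun i j : Fin n => a i ^ (n - 1 - (j : ℕ)) * b i ^ (j : ℕ)) i j) := by
    ext i j
    have hj : (j : ℕ) < n := j.is_lt
    simp only [Matrix.of_apply, ha_def, hb_def]
    rw [← pow_mul, mul_pow, show n - (j : ℕ) = (n - 1 - (j : ℕ)) + 1 by omega]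
    ring
  rw [hM, Matrix.det_mul_column, det_pvdm n a b ha]
  have hpair : (∏ i : Fin n, ∏ k ∈ Finset.Ioi i, (a i * b k - a k * b i)) =
      ∏ i : Fin n, ∏ k ∈ Finset.Ioi i,
        ((-1 : K) * (t ^ ((i : ℕ) + 1) *
          ((1 - t ^ ((k : ℕ) - (i : ℕ))) * (1 - t ^ ((i : ℕ) + (k : ℕ) + 3))))) := by
    refine Finset.prod_congr rfl fun i _ => Finset.prod_congr rfl fun k hk => ?_
    have hik : (i : ℕ) < (k : ℕ) := Fin.lt_iff_val_lt_val.mp (Finset.mem_Ioi.mp hk)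
    have h := pairfac t (i : ℕ) ((k : ℕ) - (i : ℕ) - 1)
    rw [show (i : ℕ) + ((k : ℕ) - (i : ℕ) - 1) + 2 = (k : ℕ) + 1 by omega,
      show (i : ℕ) + ((k : ℕ) - (i : ℕ) - 1) + 3 = (k : ℕ) + 2 by omega,
      show ((k : ℕ) - (i : ℕ) - 1) + 1 = (k : ℕ) - (i : ℕ) by omega,
      show 2 * (i : ℕ) + ((k : ℕ) - (i : ℕ) - 1) + 4 = (i : ℕ) + (k : ℕ) + 3 by omega] at h
    simp only [ha_def, hb_def]
    rw [h]
    ring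
  rw [hpair]
  have hsplit : (∏ i : Fin n, ∏ k ∈ Finset.Ioi i,
        ((-1 : K) * (t ^ ((i : ℕ) + 1) *
          ((1 - t ^ ((k : ℕ) - (i : ℕ))) * (1 - t ^ ((i : ℕ) + (k : ℕ) + 3)))))) =
      (∏ i : Fin n, ∏ k ∈ Finset.Ioi i, (-1 : K)) *
        ((∏ i : Fin n, ∏ k ∈ Finset.Ioi i, t ^ ((i : ℕ) + 1)) *
          ∏ i : Fin n, ∏ k ∈ Finset.Ioi i,
            ((1 - t ^ ((k : ℕ) - (i : ℕ))) * (1 - t ^ ((i : ℕ) + (k : ℕ) + 3)))) := by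
    rw [← Finset.prod_mul_distrib, ← Finset.prod_mul_distrib]
    refine Finset.prod_congr rfl fun i _ => ?_
    rw [← Finset.prod_mul_distrib, ← Finset.prod_mul_distrib]
  rw [hsplit]
  have hsign : (∏ i : Fin n, ∏ k ∈ Finset.Ioi i, (-1 : K)) = (-1 : K) ^ (n * (n - 1) / 2) := by
    rw [finDoubleProd n (fun _ _ => (-1 : K))]
    simp only [Finset.prod_const, Finset.card_range]
    rw [Finset.prod_pow_eq_pow_sum, Finset.sum_range_id]
  have hxpow : (∏ i : Fin n, ∏ k ∈ Finset.Ioi i, t ^ ((i : ℕ) + 1)) =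
      t ^ (n * (n ^ 2 - 1) / 6) := by
    rw [finDoubleProd n (fun i _ => t ^ (i + 1))]
    rw [Finset.prod_congr rfl fun k (_ : k ∈ Finset.range n) =>
      Finset.prod_pow_eq_pow_sum (Finset.range k) (fun i => i + 1) t]
    rw [Finset.prod_pow_eq_pow_sum, sumExp]
  have hrest : (∏ i : Fin n, a i) *
      (∏ i : Fin n, ∏ k ∈ Finset.Ioi i,
        ((1 - t ^ ((k : ℕ) - (i : ℕ))) * (1 - t ^ ((i : ℕ) + (k : ℕ) + 3)))) =
      ∏ k ∈ Finset.range n,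
        ((1 - t ^ (2 * k + 1)) ^ (n - k) * (1 - t ^ (2 * k + 2)) ^ (n - k)) := by
    rw [finDoubleProd n (fun i k => (1 - t ^ (k - i)) * (1 - t ^ (i + k + 3)))]
    have hA : (∏ i : Fin n, a i) =
        ∏ i ∈ Finset.range n, ((1 - t ^ (i + 1)) * (1 - t ^ (i + 2))) := by
      rw [ha_def]
      exact Fin.prod_univ_eq_prod_range (fun m => (1 - t ^ (m + 1)) * (1 - t ^ (m + 2))) n
    rw [hA]
    exact bookkeeping t n
  rw [hsign, hxpow]
  calc (∏ i : Fin n, a i) *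
      ((-1 : K) ^ (n * (n - 1) / 2) * (t ^ (n * (n ^ 2 - 1) / 6) *
        ∏ i : Fin n, ∏ k ∈ Finset.Ioi i,
          ((1 - t ^ ((k : ℕ) - (i : ℕ))) * (1 - t ^ ((i : ℕ) + (k : ℕ) + 3))))) =
      (-1 : K) ^ (n * (n - 1) / 2) * t ^ (n * (n ^ 2 - 1) / 6) *
        ((∏ i : Fin n, a i) *
          (∏ i : Fin n, ∏ k ∈ Finset.Ioi i,
            ((1 - t ^ ((k : ℕ) - (i : ℕ))) * (1 - t ^ ((i : ℕ) + (k : ℕ) + 3))))) := by ring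
    _ = _ := by rw [hrest]

lemma pushLHS {A B : Type*} [CommRing A] [CommRing B] (f : A →+* B) (n : ℕ) (y : A) :
    f ((Matrix.of fun i j : Fin n =>
        (1 - y ^ ((i : ℕ) + 1)) ^ (n - (j : ℕ)) * (1 - y ^ ((i : ℕ) + 2)) ^ (n - (j : ℕ)) *
          y ^ (((i : ℕ) + 1) * (j : ℕ))).det) =
      (Matrix.of fun i j : Fin n =>
        (1 - f y ^ ((i : ℕ) + 1)) ^ (n - (j : ℕ)) * (1 - f y ^ ((i : ℕ) + 2)) ^ (n - (j : ℕ)) *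
          f y ^ (((i : ℕ) + 1) * (j : ℕ))).det := by
  rw [RingHom.map_det]
  congr 1
  ext i j
  simp [Matrix.map_apply, map_mul, map_pow, map_sub, map_one]

lemma pushRHS {A B : Type*} [CommRing A] [CommRing B] (f : A →+* B) (n : ℕ) (y : A) :
    f ((-1 : A) ^ (n * (n - 1) / 2) * y ^ (n * (n ^ 2 - 1) / 6) *
        ∏ k ∈ Finset.range n,
          ((1 - y ^ (2 * k + 1)) ^ (n - k) * (1 - y ^ (2 * k + 2)) ^ (n - k))) =
      (-1 : B) ^ (n * (n - 1) / 2) * f y ^ (n * (n ^ 2 - 1) / 6) *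
        ∏ k ∈ Finset.range n,
          ((1 - f y ^ (2 * k + 1)) ^ (n - k) * (1 - f y ^ (2 * k + 2)) ^ (n - k)) := by
  simp [map_mul, map_pow, map_sub, map_one, map_prod, map_neg]

lemma main_poly (n : ℕ) (hn : 0 < n) :
    (Matrix.of fun i j : Fin n =>
        (1 - (Polynomial.X : Polynomial ℤ) ^ ((i : ℕ) + 1)) ^ (n - (j : ℕ)) *
          (1 - (Polynomial.X : Polynomial ℤ) ^ ((i : ℕ) + 2)) ^ (n - (j : ℕ)) *
          (Polynomial.X : Polynomial ℤ) ^ (((i : ℕ) + 1) * (j : ℕ))).det =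
      (-1 : Polynomial ℤ) ^ (n * (n - 1) / 2) *
        (Polynomial.X : Polynomial ℤ) ^ (n * (n ^ 2 - 1) / 6) *
        ∏ k ∈ Finset.range n,
          ((1 - (Polynomial.X : Polynomial ℤ) ^ (2 * k + 1)) ^ (n - k) *
            (1 - (Polynomial.X : Polynomial ℤ) ^ (2 * k + 2)) ^ (n - k)) := by
  set K := FractionRing (Polynomial ℤ)
  set φ : Polynomial ℤ →+* K := algebraMap (Polynomial ℤ) K with hφ_def
  have hinj : Function.Injective φ := IsFractionRing.injective (Polynomial ℤ) K
  apply hinj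
  rw [pushLHS φ n Polynomial.X, pushRHS φ n Polynomial.X]
  refine main_field n hn (φ Polynomial.X) fun m hm => ?_
  have h1 : (1 : K) - φ Polynomial.X ^ m = φ (1 - Polynomial.X ^ m) := by
    simp [map_sub, map_pow, map_one]
  rw [h1]
  intro h0
  have : (1 - Polynomial.X ^ m : Polynomial ℤ) = 0 := by
    apply hinj
    rw [h0, map_zero]
  have hne : (Polynomial.X : Polynomial ℤ) ^ m ≠ 1 := by
    intro h
    have := congrArg Polynomial.natDegree h
    rw [Polynomial.natDegree_X_pow, Polynomial.natDegree_one] at this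
    omega
  exact hne (by linear_combination -this)

theorem stmt12 (n : ℕ) (hn : 0 < n) (R : Type*) [CommRing R] (x : R) :
    (Matrix.of fun i j : Fin n =>
        (1 - x ^ ((i : ℕ) + 1)) ^ (n - (j : ℕ)) * (1 - x ^ ((i : ℕ) + 2)) ^ (n - (j : ℕ)) *
          x ^ (((i : ℕ) + 1) * (j : ℕ))).det =
      (-1 : R) ^ (n * (n - 1) / 2) * x ^ (n * (n ^ 2 - 1) / 6) *
        ∏ k ∈ Finset.range n,
          ((1 - x ^ (2 * k + 1)) ^ (n - k) * (1 - x ^ (2 * k + 2)) ^ (n - k)) := by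
  have f : Polynomial ℤ →+* R := (Polynomial.aeval x : Polynomial ℤ →ₐ[ℤ] R).toRingHom
  have h := congrArg (Polynomial.aeval x : Polynomial ℤ →ₐ[ℤ] R).toRingHom (main_poly n hn)
  rw [pushLHS _ n Polynomial.X, pushRHS _ n Polynomial.X] at h
  simpa using h
end

section
/- For every nonnegative integer m, the polynomial identity 1 - x^{2m+1} y^{2m+1} = (1-xy) · [ Σ_{k=0}^{m} x^k Σ_{i=0}^{k} C(m-k+i, i) C(m-i, k-i) y^{2k-2i} (1-x)^{m-k} (1-xy^2)^{m-k} + Σ_{k=1}^{m} x^k Σ_{i=0}^{k-1} C(m-k+i, i) C(m-i-1, k-i-1) y^{2k-2i-1} (1-x)^{m-k} (1-xy^2)^{m-k} ] holds in ℤ[x,y]. -/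
open Finset

private def LL {R : Type*} [CommRing R] (m : ℕ) (u v : R) : R :=
  ∑ i ∈ range (m+1), ∑ j ∈ range (m+1),
    (((m-j).choose i * (m-i).choose j : ℕ) : R) * (u^i * v^j * ((1-u)*(1-v))^(m-i-j))

private def YY {R : Type*} [CommRing R] (m : ℕ) (u v : R) : R :=
  ∑ i ∈ range (m+2), ∑ j ∈ range (m+2),
    (((m-j).choose i * (m+1-i).choose j : ℕ) : R) * (u^i * v^j * ((1-u)*(1-v))^(m+1-i-j))

private lemma chooseKill {m i j : ℕ} (h : m < i + j) : (m-j).choose i * (m-i).choose j = 0 := by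
  rcases i with _ | i
  · have : m.choose j = 0 := Nat.choose_eq_zero_of_lt (by omega)
    simp [this]
  · have : (m - j).choose (i+1) = 0 := Nat.choose_eq_zero_of_lt (by omega)
    simp [this]

private lemma pascal1 {R : Type*} [CommRing R] (m : ℕ) (u v : R) :
    LL (m+1) u v = u * LL m u v + YY m u v := by
  have hLLm : (∑ i ∈ range (m+1), ∑ j ∈ range (m+2),
      (((m-j).choose i * (m-i).choose j : ℕ) : R) * (u^i * v^j * ((1-u)*(1-v))^(m-i-j)))
      = LL m u v := by
    simp only [LL]
    refine sum_congr rfl fun i _ => ?_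
    rw [Finset.sum_range_succ]
    have h : (m-i).choose (m+1) = 0 := Nat.choose_eq_zero_of_lt (by omega)
    simp [h]
  calc LL (m+1) u v
      = (∑ i ∈ range (m+1), ∑ j ∈ range (m+2),
          (((m+1-j).choose (i+1) * (m+1-(i+1)).choose j : ℕ) : R) *
            (u^(i+1) * v^j * ((1-u)*(1-v))^(m+1-(i+1)-j)))
        + ∑ j ∈ range (m+2),
          (((m+1-j).choose 0 * (m+1-0).choose j : ℕ) : R) *
            (u^0 * v^j * ((1-u)*(1-v))^(m+1-0-j)) := by
        simp only [LL]
        exact Finset.sum_range_succ' _ (m+1)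
    _ = (∑ i ∈ range (m+1), ∑ j ∈ range (m+2),
          (u * ((((m-j).choose i * (m-i).choose j : ℕ) : R) * (u^i * v^j * ((1-u)*(1-v))^(m-i-j)))
           + (((m-j).choose (i+1) * (m+1-(i+1)).choose j : ℕ) : R) *
              (u^(i+1) * v^j * ((1-u)*(1-v))^(m+1-(i+1)-j))))
        + ∑ j ∈ range (m+2),
          (((m-j).choose 0 * (m+1-0).choose j : ℕ) : R) *
            (u^0 * v^j * ((1-u)*(1-v))^(m+1-0-j)) := by
        congr 1
        · refine sum_congr rfl fun i hi => sum_congr rfl fun j hj => ?_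
          simp only [mem_range] at hi hj
          have e1 : m+1-(i+1) = m-i := by omega
          have e2 : m+1-(i+1)-j = m-i-j := by omega
          rw [e2, e1]
          by_cases hjm : j ≤ m
          · have hP : (m+1-j).choose (i+1) = (m-j).choose i + (m-j).choose (i+1) := by
              rw [show m+1-j = (m-j)+1 by omega]
              exact Nat.choose_succ_succ _ _
            rw [hP]
            push_cast
            ring
          · have hj1 : j = m+1 := by omega
            have z1 : (m+1-j).choose (i+1) = 0 := Nat.choose_eq_zero_of_lt (by omega)
            have z2 : (m-j).choose (i+1) = 0 := Nat.choose_eq_zero_of_lt (by omega)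
            have z3 : (m-i).choose j = 0 := Nat.choose_eq_zero_of_lt (by omega)
            simp [z1, z2, z3]
        · refine sum_congr rfl fun j hj => ?_
          simp
    _ = u * LL m u v + YY m u v := by
        simp only [Finset.sum_add_distrib, ← Finset.mul_sum]
        rw [hLLm]
        simp only [YY]
        rw [Finset.sum_range_succ' (fun i => ∑ j ∈ range (m+2),
          (((m-j).choose i * (m+1-i).choose j : ℕ) : R) *
            (u^i * v^j * ((1-u)*(1-v))^(m+1-i-j))) (m+1)]
        ring

private lemma LLsymm {R : Type*} [CommRing R] (m : ℕ) (u v : R) : LL m u v = LL m v u := by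
  simp only [LL]
  rw [Finset.sum_comm]
  refine sum_congr rfl fun j _ => sum_congr rfl fun i _ => ?_
  have h : m - i - j = m - j - i := by omega
  rw [h]
  push_cast
  ring

private lemma pascal3 {R : Type*} [CommRing R] (m : ℕ) (u v : R) :
    YY (m+1) u v = ((1-u)*(1-v)) * LL (m+1) u v + v * YY m u v := by
  have hW : (∑ i ∈ range (m+3), ∑ j ∈ range (m+3),
      (((m+1-j).choose i * (m+1-i).choose j : ℕ) : R) *
        (u^i * v^j * ((1-u)*(1-v))^(m+2-i-j)))
      = ((1-u)*(1-v)) * LL (m+1) u v := by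
    rw [Finset.sum_range_succ]
    have hrow : (∑ j ∈ range (m+3),
        (((m+1-j).choose (m+2) * (m+1-(m+2)).choose j : ℕ) : R) *
          (u^(m+2) * v^j * ((1-u)*(1-v))^(m+2-(m+2)-j))) = 0 := by
      refine Finset.sum_eq_zero fun j _ => ?_
      have : (m+1-j).choose (m+2) = 0 := Nat.choose_eq_zero_of_lt (by omega)
      simp [this]
    rw [hrow, add_zero]
    have hcols : ∀ i ∈ range (m+2), (∑ j ∈ range (m+3),
        (((m+1-j).choose i * (m+1-i).choose j : ℕ) : R) *
          (u^i * v^j * ((1-u)*(1-v))^(m+2-i-j)))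
        = ∑ j ∈ range (m+2),
        (((m+1-j).choose i * (m+1-i).choose j : ℕ) : R) *
          (u^i * v^j * ((1-u)*(1-v))^(m+2-i-j)) := by
      intro i _
      rw [Finset.sum_range_succ]
      have : (m+1-i).choose (m+2) = 0 := Nat.choose_eq_zero_of_lt (by omega)
      simp [this]
    rw [Finset.sum_congr rfl hcols]
    rw [LL, Finset.mul_sum]
    refine sum_congr rfl fun i hi => ?_
    rw [Finset.mul_sum]
    refine sum_congr rfl fun j hj => ?_
    simp only [mem_range] at hi hj
    by_cases hij : i + j ≤ m + 1
    · have e : m+2-i-j = (m+1-i-j)+1 := by omega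
      rw [e, pow_succ]
      ring
    · have : (m+1-j).choose i * (m+1-i).choose j = 0 := chooseKill (by omega)
      simp [this]
  have hW2 : (∑ i ∈ range (m+3), ∑ j ∈ range (m+2),
      (((m+1-(j+1)).choose i * (m+1-i).choose (j+1) : ℕ) : R) *
        (u^i * v^(j+1) * ((1-u)*(1-v))^(m+2-i-(j+1))))
      + (∑ i ∈ range (m+3),
      (((m+1-0).choose i * (m+1-i).choose 0 : ℕ) : R) *
        (u^i * v^0 * ((1-u)*(1-v))^(m+2-i-0)))
      = ((1-u)*(1-v)) * LL (m+1) u v := by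
    rw [← Finset.sum_add_distrib]
    rw [← hW]
    refine sum_congr rfl fun i _ => ?_
    exact (Finset.sum_range_succ' (fun j => (((m+1-j).choose i * (m+1-i).choose j : ℕ) : R) *
        (u^i * v^j * ((1-u)*(1-v))^(m+2-i-j))) (m+2)).symm
  have hB : (∑ i ∈ range (m+3), ∑ j ∈ range (m+2),
      (((m-j).choose i * (m+1-i).choose j : ℕ) : R) *
        (u^i * v^j * ((1-u)*(1-v))^(m+1-i-j))) = YY m u v := by
    rw [Finset.sum_range_succ]
    have hz : (∑ j ∈ range (m+2),
        (((m-j).choose (m+2) * (m+1-(m+2)).choose j : ℕ) : R) *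
          (u^(m+2) * v^j * ((1-u)*(1-v))^(m+1-(m+2)-j))) = 0 := by
      refine Finset.sum_eq_zero fun j _ => ?_
      have : (m-j).choose (m+2) = 0 := Nat.choose_eq_zero_of_lt (by omega)
      simp [this]
    rw [hz, add_zero]
    rfl
  calc YY (m+1) u v
      = ∑ i ∈ range (m+3), ((∑ j ∈ range (m+2),
          (((m+1-(j+1)).choose i * (m+1+1-i).choose (j+1) : ℕ) : R) *
            (u^i * v^(j+1) * ((1-u)*(1-v))^(m+1+1-i-(j+1))))
          + (((m+1-0).choose i * (m+1+1-i).choose 0 : ℕ) : R) *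
            (u^i * v^0 * ((1-u)*(1-v))^(m+1+1-i-0))) := by
        simp only [YY]
        refine sum_congr rfl fun i _ => ?_
        exact Finset.sum_range_succ' _ (m+2)
    _ = ∑ i ∈ range (m+3), ((∑ j ∈ range (m+2),
          ((((m+1-(j+1)).choose i * (m+1-i).choose (j+1) : ℕ) : R) *
            (u^i * v^(j+1) * ((1-u)*(1-v))^(m+2-i-(j+1)))
           + v * ((((m-j).choose i * (m+1-i).choose j : ℕ) : R) *
              (u^i * v^j * ((1-u)*(1-v))^(m+1-i-j)))))
          + (((m+1-0).choose i * (m+1-i).choose 0 : ℕ) : R) *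
            (u^i * v^0 * ((1-u)*(1-v))^(m+2-i-0))) := by
        refine sum_congr rfl fun i hi => ?_
        congr 1
        · refine sum_congr rfl fun j hj => ?_
          simp only [mem_range] at hi hj
          have e0 : m+1-(j+1) = m-j := by omega
          have e3 : m+1+1-i-(j+1) = m+1-i-j := by omega
          rw [e0, e3]
          by_cases him : i ≤ m+1
          · have e2 : m+1+1-i = (m+1-i)+1 := by omega
            rw [e2, Nat.choose_succ_succ]
            push_cast
            ring
          · have z1 : (m-j).choose i = 0 := Nat.choose_eq_zero_of_lt (by omega)
            simp [z1]
        · simp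
    _ = ((1-u)*(1-v)) * LL (m+1) u v + v * YY m u v := by
        simp only [Finset.sum_add_distrib, ← Finset.mul_sum]
        rw [hB]
        linear_combination hW2

theorem tmp : True := trivial

private lemma LLrec {R : Type*} [CommRing R] (m : ℕ) (u v : R) :
    LL (m+2) u v = (1 + u*v) * LL (m+1) u v - (u*v) * LL m u v := by
  have h1 := pascal1 (m+1) u v
  have h2 := pascal3 m u v
  have h3 := pascal1 m u v
  linear_combination h1 + h2 - v * h3

private lemma LLgeom {R : Type*} [CommRing R] (m : ℕ) (u v : R) :
    LL m u v = ∑ n ∈ range (m+1), (u*v)^n := by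
  induction m using Nat.twoStepInduction with
  | zero => simp [LL]
  | one =>
      simp [LL, Finset.sum_range_succ]
      ring
  | more m ih1 ih2 =>
      rw [LLrec, ih1, ih2]
      rw [Finset.sum_range_succ ((u*v)^·) (m+2), Finset.sum_range_succ ((u*v)^·) (m+1)]
      ring

private lemma tri' {R : Type*} [CommRing R] (n : ℕ) (f : ℕ → ℕ → R) :
    ∑ k ∈ range n, ∑ i ∈ range (k+1), f i (k-i) =
      ∑ i ∈ range n, ∑ j ∈ range (n - i), f i j := by
  induction n with
  | zero => simp
  | succ n ih =>
      rw [Finset.sum_range_succ, ih]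
      have h1 : ∀ i ∈ range (n+1), (∑ j ∈ range (n+1-i), f i j)
          = ∑ j ∈ range (n-i), f i j + f i (n-i) := by
        intro i hi
        simp only [mem_range] at hi
        rw [show n+1-i = (n-i)+1 by omega, Finset.sum_range_succ]
      rw [Finset.sum_congr rfl h1, Finset.sum_add_distrib, Finset.sum_range_succ
        (fun i => ∑ j ∈ range (n-i), f i j) n]
      simp

private lemma tri {R : Type*} [CommRing R] (n : ℕ) (f : ℕ → ℕ → R)
    (hf : ∀ i j, n ≤ i + j → f i j = 0) :
    ∑ k ∈ range n, ∑ i ∈ range (k+1), f i (k-i) = ∑ i ∈ range n, ∑ j ∈ range n, f i j := by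
  rw [tri']
  refine sum_congr rfl fun i hi => ?_
  simp only [mem_range] at hi
  refine Finset.sum_subset (Finset.range_subset_range.mpr (by omega)) fun j hj hnj => ?_
  simp only [mem_range, not_lt] at hj hnj
  exact hf i j (by omega)

private lemma GS {R : Type*} [CommRing R] (z : R) (m : ℕ) :
    ∑ n ∈ range (2*m+1), z^n = ∑ n ∈ range (m+1), (z*z)^n + z * ∑ n ∈ range m, (z*z)^n := by
  induction m with
  | zero => simp
  | succ n ih =>
      rw [show 2*(n+1)+1 = (2*n+1)+1+1 by ring, Finset.sum_range_succ, Finset.sum_range_succ, ih,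
        Finset.sum_range_succ ((z*z)^·) (n+1), Finset.sum_range_succ ((z*z)^·) n]
      ring

private lemma evenPart {R : Type*} [CommRing R] (m : ℕ) (x y : R) :
    (∑ k ∈ Finset.range (m + 1), x ^ k *
        ∑ i ∈ Finset.range (k + 1),
          (((m - k + i).choose i * (m - i).choose (k - i) : ℕ) : R) *
            (y ^ (2 * k - 2 * i) * (1 - x) ^ (m - k) * (1 - x * y ^ 2) ^ (m - k)))
      = ∑ n ∈ range (m+1), (x * (x * y^2))^n := by
  rw [← LLgeom, LL]
  rw [← tri (m+1) (fun i j => (((m-j).choose i * (m-i).choose j : ℕ) : R) *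
      (x^i * (x*y^2)^j * ((1-x)*(1-x*y^2))^(m-i-j)))
      (fun i j hij => by have h := chooseKill (m := m) (i := i) (j := j) (by omega); simp [h])]
  refine sum_congr rfl fun k hk => ?_
  rw [Finset.mul_sum]
  refine sum_congr rfl fun i hi => ?_
  simp only [mem_range] at hk hi
  obtain ⟨j, rfl⟩ : ∃ j, k = i + j := ⟨k - i, by omega⟩
  have e1 : m - (i+j) + i = m - j := by omega
  have e2 : (i+j) - i = j := by omega
  have e3 : 2*(i+j) - 2*i = 2*j := by omega
  have e4 : m - (i+j) = m - i - j := by omega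
  rw [e1, e2, e3, e4]
  simp only [pow_add, mul_pow, pow_mul]
  ring

private lemma oddPart {R : Type*} [CommRing R] (m : ℕ) (x y : R) :
    (∑ k ∈ Finset.Icc 1 (m+1), x ^ k *
        ∑ i ∈ Finset.range k,
          (((m + 1 - k + i).choose i * (m + 1 - i - 1).choose (k - i - 1) : ℕ) : R) *
            (y ^ (2 * k - 2 * i - 1) * (1 - x) ^ (m + 1 - k) * (1 - x * y ^ 2) ^ (m + 1 - k)))
      = (x*y) * ∑ n ∈ range (m+1), (x * (x * y^2))^n := by
  rw [← Finset.Ico_add_one_right_eq_Icc, Finset.sum_Ico_eq_sum_range]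
  rw [show m+1+1-1 = m+1 by omega]
  rw [← LLgeom, LL]
  rw [← tri (m+1) (fun i j => (((m-j).choose i * (m-i).choose j : ℕ) : R) *
      (x^i * (x*y^2)^j * ((1-x)*(1-x*y^2))^(m-i-j)))
      (fun i j hij => by have h := chooseKill (m := m) (i := i) (j := j) (by omega); simp [h])]
  rw [Finset.mul_sum]
  refine sum_congr rfl fun k hk => ?_
  rw [Finset.mul_sum, Finset.mul_sum]
  refine sum_congr (by rw [Nat.add_comm 1 k]) fun i hi => ?_
  simp only [mem_range] at hk hi
  obtain ⟨j, rfl⟩ : ∃ j, k = i + j := ⟨k - i, by omega⟩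
  have e1 : m + 1 - (1+(i+j)) + i = m - j := by omega
  have e2 : m + 1 - i - 1 = m - i := by omega
  have e3 : (1+(i+j)) - i - 1 = j := by omega
  have e4 : 2*(1+(i+j)) - 2*i - 1 = 2*j+1 := by omega
  have e5 : m + 1 - (1+(i+j)) = m - i - j := by omega
  have e6 : (i+j) - i = j := by omega
  rw [e1, e2, e3, e4, e5, e6]
  simp only [pow_add, mul_pow, pow_mul, pow_one]
  ring

theorem stmt15 (m : ℕ) (R : Type*) [CommRing R] (x y : R) :
    1 - x ^ (2 * m + 1) * y ^ (2 * m + 1) =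
      (1 - x * y) *
        ((∑ k ∈ Finset.range (m + 1), x ^ k *
            ∑ i ∈ Finset.range (k + 1),
              (((m - k + i).choose i * (m - i).choose (k - i) : ℕ) : R) *
                (y ^ (2 * k - 2 * i) * (1 - x) ^ (m - k) * (1 - x * y ^ 2) ^ (m - k))) +
          ∑ k ∈ Finset.Icc 1 m, x ^ k *
            ∑ i ∈ Finset.range k,
              (((m - k + i).choose i * (m - i - 1).choose (k - i - 1) : ℕ) : R) *
                (y ^ (2 * k - 2 * i - 1) * (1 - x) ^ (m - k) * (1 - x * y ^ 2) ^ (m - k))) := by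
  cases m with
  | zero => simp
  | succ m =>
      rw [evenPart, oddPart, show x * (x * y^2) = (x*y)*(x*y) by ring, ← GS (x*y) (m+1)]
      linear_combination geom_sum_mul (x*y) (2*(m+1)+1)
end
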